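/- arXiv:math/0601125 — 6 statements merged into one kernel-verified Lean document; each statement's English description precedes it below -/
import Mathlib

section
/- Let h : I → ℝ be a C² diffeomorphism of an open interval such that 1/√|h'| is convex on I. Then κ_h(a,b,c,d) ≥ 1 whenever (b-a)(d-c) > 0, i.e., ρ_h(a,b,c,d) := log κ_h(a,b,c,d)/((b-a)(d-c)) ≥ 0 for all distinct points a,b,c,d in I. -/
/-!
After replacing `h` by `-h` we may assume `h' > 0`. Let `logSlope h x y` be the logarithm of
the divided difference `(h y - h x) / (y - x)`, extended to the diagonal by `log (h' x)`, and
let `G(a,b,c,d) = logSlope h b c + logSlope h a d - logSlope h a c - logSlope h b d`, which is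
`log κ_h(a,b,c,d)` for distinct points. Comparing the convex function `1/√h'` with its chord on
`[x, y]` and integrating the resulting bound `h' ≥ 1/chord²` gives
`h' x * h' y * (y - x)² ≤ (h y - h x)²`. This says that the mixed partial derivative of
`logSlope h` is nonpositive off the diagonal, and also that `G(x,y,x,y) ≥ 0`. Since `G` is
additive in each of the intervals `[a, b]` and `[c, d]`, cutting them at the four points reduces
`G(a,b,c,d) ≥ 0` for `a ≤ b`, `c ≤ d` to such diagonal squares and to rectangles with disjoint
interiors, where the sign of the mixed partial suffices.
-/

/-- Cross-ratio of four points. -/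
noncomputable def chi (a b c d : ℝ) : ℝ := ((c - b) * (d - a)) / ((c - a) * (d - b))

/-- Distortion of the cross-ratio by a map `h`. -/
noncomputable def kappa (h : ℝ → ℝ) (a b c d : ℝ) : ℝ :=
  chi (h a) (h b) (h c) (h d) / chi a b c d

open Set Real

theorem sub_le_mul_mul_sub_of_convexOn {f u : ℝ → ℝ} {x y : ℝ} (hxy : x < y)
    (hf : ContinuousOn f (Icc x y)) (hf' : DifferentiableOn ℝ f (Ioo x y))
    (hu : ConvexOn ℝ (Icc x y) u) (hu0 : ∀ t ∈ Icc x y, 0 < u t)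
    (hfu : ∀ t ∈ Ioo x y, 1 ≤ u t ^ 2 * deriv f t) :
    y - x ≤ u x * u y * (f y - f x) := by
  have hx : x ∈ Icc x y := left_mem_Icc.2 hxy.le
  have hy : y ∈ Icc x y := right_mem_Icc.2 hxy.le
  set m := (u y - u x) / (y - x)
  set L : ℝ → ℝ := fun t => u x + (t - x) * m
  have hLy : L y = u y := by simp only [L, m]; field_simp [(sub_pos.2 hxy).ne']; ring
  have huL : ∀ t ∈ Icc x y, u t ≤ L t := by
    rintro t ⟨hxt, hty⟩
    rcases hxt.eq_or_lt with rfl | hxt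
    · simp [L]
    have hsec := hu.secant_mono hx ⟨hxt.le, hty⟩ hy hxt.ne' hxy.ne' hty
    rw [div_le_iff₀ (sub_pos.2 hxt)] at hsec
    simp only [L]; linarith
  have hLpos : ∀ t ∈ Icc x y, 0 < L t := fun t ht => (hu0 t ht).trans_le (huL t ht)
  -- `Φ` is a primitive of `1 / L²`, the lower bound for `f'` given by the chord `L ≥ u`.
  set Φ : ℝ → ℝ := fun t => (t - x) / (u x * L t)
  have hΦ : ∀ t ∈ Icc x y, HasDerivAt Φ (L t ^ 2)⁻¹ t := by
    intro t ht
    have hL : HasDerivAt L (1 * m) t :=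
      (((hasDerivAt_id' t).sub_const x).mul_const m).const_add (u x)
    have := ((hasDerivAt_id' t).sub_const x).fun_div (hL.const_mul (u x))
      (mul_pos (hu0 x hx) (hLpos t ht)).ne'
    refine this.congr_deriv ?_
    have hLt := (hLpos t ht).ne'
    have hux := (hu0 x hx).ne'
    simp only [L]
    field_simp
    ring
  have hmono : MonotoneOn (fun t => f t - Φ t) (Icc x y) := by
    refine monotoneOn_of_deriv_nonneg (convex_Icc x y)
      (hf.sub fun t ht => (hΦ t ht).continuousAt.continuousWithinAt) ?_ ?_ <;>
      rw [interior_Icc]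
    · exact hf'.sub fun t ht =>
        (hΦ t (Ioo_subset_Icc_self ht)).differentiableAt.differentiableWithinAt
    · intro t ht
      have htI := Ioo_subset_Icc_self ht
      rw [deriv_fun_sub (hf'.differentiableAt (isOpen_Ioo.mem_nhds ht))
        (hΦ t htI).differentiableAt, (hΦ t htI).deriv, sub_nonneg,
        inv_le_iff_one_le_mul₀' (pow_pos (hLpos t htI) 2)]
      have hf't : 0 ≤ deriv f t := by nlinarith [hfu t ht, sq_nonneg (u t)]
      calc 1 ≤ u t ^ 2 * deriv f t := hfu t ht
        _ ≤ L t ^ 2 * deriv f t := by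
          gcongr
          · exact (hu0 t htI).le
          · exact huL t htI
  have hxy' := hmono hx hy hxy.le
  simp only [Φ, sub_self, zero_div, sub_zero, hLy] at hxy'
  rw [← div_le_iff₀' (mul_pos (hu0 x hx) (hu0 y hy))]
  linarith

theorem dslope_comm {𝕜 E : Type*} [NontriviallyNormedField 𝕜] [NormedAddCommGroup E]
    [NormedSpace 𝕜 E] (f : 𝕜 → E) (x y : 𝕜) : dslope f x y = dslope f y x := by
  rcases eq_or_ne x y with rfl | hxy
  · rfl
  rw [dslope_of_ne f hxy.symm, dslope_of_ne f hxy, slope_comm]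

noncomputable def logSlope (h : ℝ → ℝ) (x y : ℝ) : ℝ := log (dslope h x y)

theorem logSlope_comm (h : ℝ → ℝ) (x y : ℝ) : logSlope h x y = logSlope h y x := by
  rw [logSlope, logSlope, dslope_comm]

noncomputable def logSlopeDeriv (h : ℝ → ℝ) (v x : ℝ) : ℝ :=
  deriv h x / (h x - h v) - 1 / (x - v)

noncomputable def logDistortion (h : ℝ → ℝ) (a b c d : ℝ) : ℝ :=
  logSlope h b c + logSlope h a d - logSlope h a c - logSlope h b d

section logDistortion

variable (h : ℝ → ℝ) (a b c d e : ℝ)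

theorem logDistortion_comm : logDistortion h c d a b = logDistortion h a b c d := by
  rw [logDistortion, logDistortion, logSlope_comm h d a, logSlope_comm h c b,
    logSlope_comm h c a, logSlope_comm h d b]
  ring

theorem logDistortion_swap_left : logDistortion h b a c d = -logDistortion h a b c d := by
  rw [logDistortion, logDistortion]; ring

theorem logDistortion_swap_right : logDistortion h a b d c = -logDistortion h a b c d := by
  rw [logDistortion, logDistortion]; ring

theorem logDistortion_self_right : logDistortion h a b c c = 0 := by
  rw [logDistortion]; ring

theorem logDistortion_add_left :
    logDistortion h a b c d + logDistortion h b e c d = logDistortion h a e c d := by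
  simp only [logDistortion]; ring

theorem logDistortion_add_right :
    logDistortion h a b c d + logDistortion h a b d e = logDistortion h a b c e := by
  simp only [logDistortion]; ring

end logDistortion

theorem kappa_neg (h : ℝ → ℝ) (a b c d : ℝ) :
    kappa (fun x => -h x) a b c d = kappa h a b c d := by
  simp only [kappa, chi, neg_sub_neg]
  congr 1
  rw [← neg_sub (h b), ← neg_sub (h a), ← neg_sub (h a) (h c), ← neg_sub (h b) (h d)]
  ring

section

variable {p q : ℝ} {h : ℝ → ℝ}

theorem sub_ne_zero_of_deriv_pos (hdiff : DifferentiableOn ℝ h (Ioo p q))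
    (hpos : ∀ x ∈ Ioo p q, 0 < deriv h x) {x y : ℝ} (hx : x ∈ Ioo p q) (hy : y ∈ Ioo p q)
    (hxy : x ≠ y) : h x - h y ≠ 0 :=
  sub_ne_zero.2 <| (strictMonoOn_of_deriv_pos (convex_Ioo p q) hdiff.continuousOn
    (by rwa [interior_Ioo])).injOn.ne hx hy hxy

theorem dslope_pos (hdiff : DifferentiableOn ℝ h (Ioo p q))
    (hpos : ∀ x ∈ Ioo p q, 0 < deriv h x) {x y : ℝ} (hx : x ∈ Ioo p q)
    (hy : y ∈ Ioo p q) : 0 < dslope h x y := by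
  rcases eq_or_ne y x with rfl | hyx
  · rw [dslope_same]; exact hpos y hy
  rw [dslope_of_ne h hyx]
  exact (strictMonoOn_of_deriv_pos (convex_Ioo p q) hdiff.continuousOn
    (by rwa [interior_Ioo])).slope_pos hx hy hyx.symm

theorem deriv_mul_deriv_le_dslope_sq (hdiff : DifferentiableOn ℝ h (Ioo p q))
    (hpos : ∀ x ∈ Ioo p q, 0 < deriv h x)
    (hconv : ConvexOn ℝ (Ioo p q) (fun x => 1 / √|deriv h x|)) {x y : ℝ}
    (hx : x ∈ Ioo p q) (hy : y ∈ Ioo p q) :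
    deriv h x * deriv h y ≤ dslope h x y ^ 2 := by
  wlog hxy : x < y generalizing x y
  · rcases (not_lt.1 hxy).eq_or_lt with rfl | hyx
    · rw [dslope_same, sq]
    · rw [mul_comm, dslope_comm]; exact this hy hx hyx
  set u : ℝ → ℝ := fun t => 1 / √|deriv h t|
  have hsub : Icc x y ⊆ Ioo p q := Icc_subset_Ioo hx.1 hy.2
  have hu : ∀ t ∈ Ioo p q, u t ^ 2 * deriv h t = 1 := fun t ht => by
    simp only [u]
    rw [abs_of_pos (hpos t ht), div_pow, sq_sqrt (hpos t ht).le, one_pow,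
      one_div_mul_cancel (hpos t ht).ne']
  have key := sub_le_mul_mul_sub_of_convexOn hxy (hdiff.continuousOn.mono hsub)
    (hdiff.mono (Ioo_subset_Icc_self.trans hsub)) (hconv.subset hsub (convex_Icc x y))
    (fun t ht => one_div_pos.2 (sqrt_pos.2 (abs_pos.2 (hpos t (hsub ht)).ne')))
    (fun t ht => (hu t (hsub (Ioo_subset_Icc_self ht))).ge)
  rw [dslope_of_ne h hxy.ne', slope_def_field, div_pow,
    le_div_iff₀ (pow_pos (sub_pos.2 hxy) 2)]
  have hxy' := (mul_pos (hpos x hx) (hpos y hy)).le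
  calc deriv h x * deriv h y * (y - x) ^ 2
      ≤ deriv h x * deriv h y * (u x * u y * (h y - h x)) ^ 2 := by gcongr
    _ = (u x ^ 2 * deriv h x) * (u y ^ 2 * deriv h y) * (h y - h x) ^ 2 := by ring
    _ = (h y - h x) ^ 2 := by rw [hu x hx, hu y hy]; ring

theorem continuousOn_logSlope (hdiff : DifferentiableOn ℝ h (Ioo p q))
    (hpos : ∀ x ∈ Ioo p q, 0 < deriv h x) {v : ℝ} (hv : v ∈ Ioo p q) :
    ContinuousOn (logSlope h v) (Ioo p q) :=
  ((continuousOn_dslope (isOpen_Ioo.mem_nhds hv)).2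
    ⟨hdiff.continuousOn, hdiff.differentiableAt (isOpen_Ioo.mem_nhds hv)⟩).log
    fun _ hx => (dslope_pos hdiff hpos hv hx).ne'

theorem hasDerivAt_logSlope (hdiff : DifferentiableOn ℝ h (Ioo p q))
    (hpos : ∀ x ∈ Ioo p q, 0 < deriv h x) {v x : ℝ} (hv : v ∈ Ioo p q) (hx : x ∈ Ioo p q)
    (hxv : x ≠ v) : HasDerivAt (logSlope h v) (logSlopeDeriv h v x) x := by
  have hhx := sub_ne_zero_of_deriv_pos hdiff hpos hx hv hxv
  have hxv' := sub_ne_zero.2 hxv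
  have hq := ((hdiff.differentiableAt (isOpen_Ioo.mem_nhds hx)).hasDerivAt.sub_const (h v)).fun_div
    ((hasDerivAt_id' x).sub_const v) hxv'
  refine ((hq.log (div_ne_zero hhx hxv')).congr_of_eventuallyEq ?_).congr_deriv ?_
  · filter_upwards [dslope_eventuallyEq_slope_of_ne h hxv] with t ht
    rw [logSlope, ht, slope_def_field]
  · rw [logSlopeDeriv]
    field_simp

theorem antitoneOn_logSlopeDeriv (hdiff : DifferentiableOn ℝ h (Ioo p q))
    (hpos : ∀ x ∈ Ioo p q, 0 < deriv h x)
    (hconv : ConvexOn ℝ (Ioo p q) (fun x => 1 / √|deriv h x|)) {x : ℝ} (hx : x ∈ Ioo p q) :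
    AntitoneOn (fun v => logSlopeDeriv h v x) (Ioo x q) := by
  have hder : ∀ v ∈ Ioo x q, HasDerivAt (fun v => logSlopeDeriv h v x)
      (deriv h x * deriv h v / (h x - h v) ^ 2 - 1 / (x - v) ^ 2) v := by
    intro v hv
    have hvI : v ∈ Ioo p q := ⟨hx.1.trans hv.1, hv.2⟩
    have hhv := sub_ne_zero_of_deriv_pos hdiff hpos hx hvI hv.1.ne
    have hxv := sub_ne_zero.2 hv.1.ne
    have := ((hasDerivAt_const v (deriv h x)).fun_div
      ((hdiff.differentiableAt (isOpen_Ioo.mem_nhds hvI)).hasDerivAt.const_sub (h x)) hhv).sub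
      ((hasDerivAt_const v 1).fun_div ((hasDerivAt_id' v).const_sub x) hxv)
    refine this.congr_deriv ?_
    field_simp
    ring
  refine antitoneOn_of_deriv_nonpos (convex_Ioo x q)
    (fun v hv => (hder v hv).continuousAt.continuousWithinAt) ?_ ?_ <;> rw [interior_Ioo]
  · exact fun v hv => (hder v hv).differentiableAt.differentiableWithinAt
  intro v hv
  have hvI : v ∈ Ioo p q := ⟨hx.1.trans hv.1, hv.2⟩
  have hhv := sub_ne_zero_of_deriv_pos hdiff hpos hx hvI hv.1.ne
  have hxv := sub_ne_zero.2 hv.1.ne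
  have key := deriv_mul_deriv_le_dslope_sq hdiff hpos hconv hvI hx
  rw [dslope_of_ne h hv.1.ne, slope_def_field, div_pow, le_div_iff₀ (by positivity)] at key
  rw [(hder v hv).deriv, sub_nonpos, div_le_div_iff₀ (by positivity) (by positivity)]
  linarith

theorem antitoneOn_logSlope_sub_logSlope (hdiff : DifferentiableOn ℝ h (Ioo p q))
    (hpos : ∀ x ∈ Ioo p q, 0 < deriv h x)
    (hconv : ConvexOn ℝ (Ioo p q) (fun x => 1 / √|deriv h x|)) {u v : ℝ} (hu : u ∈ Ioo p q)
    (hv : v ∈ Ioo p q) (huv : u < v) :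
    AntitoneOn (fun x => logSlope h v x - logSlope h u x) (Ioc p u) := by
  have hsub : Ioc p u ⊆ Ioo p q := Ioc_subset_Ioo_right hu.2
  have hder : ∀ x ∈ Ioo p u, HasDerivAt (fun x => logSlope h v x - logSlope h u x)
      (logSlopeDeriv h v x - logSlopeDeriv h u x) x := fun x hx =>
    (hasDerivAt_logSlope hdiff hpos hv (hsub (Ioo_subset_Ioc_self hx)) (hx.2.trans huv).ne).sub
      (hasDerivAt_logSlope hdiff hpos hu (hsub (Ioo_subset_Ioc_self hx)) hx.2.ne)
  refine antitoneOn_of_deriv_nonpos (convex_Ioc p u)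
    (((continuousOn_logSlope hdiff hpos hv).sub (continuousOn_logSlope hdiff hpos hu)).mono hsub)
    ?_ ?_ <;> rw [interior_Ioc]
  · exact fun x hx => (hder x hx).differentiableAt.differentiableWithinAt
  intro x hx
  rw [(hder x hx).deriv, sub_nonpos]
  exact antitoneOn_logSlopeDeriv hdiff hpos hconv (hsub (Ioo_subset_Ioc_self hx))
    ⟨hx.2, hu.2⟩ ⟨hx.2.trans huv, hv.2⟩ huv.le

theorem logDistortion_nonneg_of_le_of_le_of_le (hdiff : DifferentiableOn ℝ h (Ioo p q))
    (hpos : ∀ x ∈ Ioo p q, 0 < deriv h x)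
    (hconv : ConvexOn ℝ (Ioo p q) (fun x => 1 / √|deriv h x|)) {a b c d : ℝ}
    (ha : a ∈ Ioo p q) (hc : c ∈ Ioo p q) (hd : d ∈ Ioo p q)
    (hab : a ≤ b) (hbc : b ≤ c) (hcd : c ≤ d) : 0 ≤ logDistortion h a b c d := by
  rcases hcd.eq_or_lt with rfl | hcd
  · rw [logDistortion_self_right]
  have hanti := antitoneOn_logSlope_sub_logSlope hdiff hpos hconv hc hd hcd
    ⟨ha.1, hab.trans hbc⟩ ⟨ha.1.trans_le hab, hbc⟩ hab
  rw [logDistortion, logSlope_comm h a d, logSlope_comm h b d, logSlope_comm h a c,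
    logSlope_comm h b c]
  linarith

theorem logDistortion_diag_nonneg (hdiff : DifferentiableOn ℝ h (Ioo p q))
    (hpos : ∀ x ∈ Ioo p q, 0 < deriv h x)
    (hconv : ConvexOn ℝ (Ioo p q) (fun x => 1 / √|deriv h x|)) {x y : ℝ}
    (hx : x ∈ Ioo p q) (hy : y ∈ Ioo p q) : 0 ≤ logDistortion h x y x y := by
  have key := log_le_log (mul_pos (hpos x hx) (hpos y hy))
    (deriv_mul_deriv_le_dslope_sq hdiff hpos hconv hx hy)
  rw [log_mul (hpos x hx).ne' (hpos y hy).ne', log_pow] at key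
  rw [logDistortion, logSlope, logSlope, logSlope, logSlope, dslope_same, dslope_same,
    dslope_comm h y x]
  push_cast at key
  linarith

theorem logDistortion_nonneg (hdiff : DifferentiableOn ℝ h (Ioo p q))
    (hpos : ∀ x ∈ Ioo p q, 0 < deriv h x)
    (hconv : ConvexOn ℝ (Ioo p q) (fun x => 1 / √|deriv h x|)) {a b c d : ℝ}
    (ha : a ∈ Ioo p q) (hb : b ∈ Ioo p q) (hc : c ∈ Ioo p q) (hd : d ∈ Ioo p q)
    (hab : a ≤ b) (hcd : c ≤ d) : 0 ≤ logDistortion h a b c d := by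
  wlog hac : a ≤ c generalizing a b c d
  · rw [← logDistortion_comm]; exact this hc hd ha hb hcd hab (le_of_not_ge hac)
  rcases le_or_gt b c with hbc | hcb
  · exact logDistortion_nonneg_of_le_of_le_of_le hdiff hpos hconv ha hc hd hab hbc hcd
  -- Cut `[a, b]` at `c`, then cut the overlap `[c, b] × [c, d]` at `min b d`.
  rw [← logDistortion_add_left h a c c d b]
  refine add_nonneg
    (logDistortion_nonneg_of_le_of_le_of_le hdiff hpos hconv ha hc hd hac le_rfl hcd) ?_
  rcases le_or_gt b d with hbd | hdb
  · rw [← logDistortion_add_right h c b c b d]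
    exact add_nonneg (logDistortion_diag_nonneg hdiff hpos hconv hc hb)
      (logDistortion_nonneg_of_le_of_le_of_le hdiff hpos hconv hc hb hd hcb.le le_rfl hbd)
  · rw [← logDistortion_add_left h c d c d b, logDistortion_comm h c d d b]
    exact add_nonneg (logDistortion_diag_nonneg hdiff hpos hconv hc hd)
      (logDistortion_nonneg_of_le_of_le_of_le hdiff hpos hconv hc hd hb hcd le_rfl hdb.le)

theorem logDistortion_mul_nonneg (hdiff : DifferentiableOn ℝ h (Ioo p q))
    (hpos : ∀ x ∈ Ioo p q, 0 < deriv h x)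
    (hconv : ConvexOn ℝ (Ioo p q) (fun x => 1 / √|deriv h x|)) {a b c d : ℝ}
    (ha : a ∈ Ioo p q) (hb : b ∈ Ioo p q) (hc : c ∈ Ioo p q) (hd : d ∈ Ioo p q) :
    0 ≤ logDistortion h a b c d * ((b - a) * (d - c)) := by
  rcases le_total a b with hab | hba <;> rcases le_total c d with hcd | hdc
  · exact mul_nonneg (logDistortion_nonneg hdiff hpos hconv ha hb hc hd hab hcd)
      (mul_nonneg (sub_nonneg.2 hab) (sub_nonneg.2 hcd))
  · have := logDistortion_nonneg hdiff hpos hconv ha hb hd hc hab hdc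
    rw [logDistortion_swap_right] at this
    exact mul_nonneg_of_nonpos_of_nonpos (neg_nonneg.1 this)
      (mul_nonpos_of_nonneg_of_nonpos (sub_nonneg.2 hab) (sub_nonpos.2 hdc))
  · have := logDistortion_nonneg hdiff hpos hconv hb ha hc hd hba hcd
    rw [logDistortion_swap_left] at this
    exact mul_nonneg_of_nonpos_of_nonpos (neg_nonneg.1 this)
      (mul_nonpos_of_nonpos_of_nonneg (sub_nonpos.2 hba) (sub_nonneg.2 hcd))
  · have := logDistortion_nonneg hdiff hpos hconv hb ha hd hc hba hdc
    rw [logDistortion_swap_left, logDistortion_swap_right, neg_neg] at this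
    exact mul_nonneg this (mul_nonneg_of_nonpos_of_nonpos (sub_nonpos.2 hba) (sub_nonpos.2 hdc))

theorem kappa_eq_exp_logDistortion (hdiff : DifferentiableOn ℝ h (Ioo p q))
    (hpos : ∀ x ∈ Ioo p q, 0 < deriv h x) {a b c d : ℝ}
    (ha : a ∈ Ioo p q) (hb : b ∈ Ioo p q) (hc : c ∈ Ioo p q) (hd : d ∈ Ioo p q)
    (hac : a ≠ c) (had : a ≠ d) (hbc : b ≠ c) (hbd : b ≠ d) :
    kappa h a b c d = exp (logDistortion h a b c d) := by
  have hexp : ∀ {x y}, x ∈ Ioo p q → y ∈ Ioo p q → x ≠ y →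
      exp (logSlope h x y) = (h y - h x) / (y - x) := fun hx hy hxy => by
    rw [logSlope, exp_log (dslope_pos hdiff hpos hx hy), dslope_of_ne h hxy.symm, slope_def_field]
  rw [logDistortion, exp_sub, exp_sub, exp_add, hexp hb hc hbc, hexp ha hd had, hexp ha hc hac,
    hexp hb hd hbd, kappa, chi, chi]
  have hh : ∀ {x y}, x ∈ Ioo p q → y ∈ Ioo p q → x ≠ y → h y - h x ≠ 0 :=
    fun hx hy hxy => sub_ne_zero_of_deriv_pos hdiff hpos hy hx hxy.symm
  field_simp [hh hb hc hbc, hh ha hd had, hh ha hc hac, hh hb hd hbd, sub_ne_zero.2 hbc.symm,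
    sub_ne_zero.2 had.symm, sub_ne_zero.2 hac.symm, sub_ne_zero.2 hbd.symm]

end

theorem kappa_ge_one_of_convex_general (p q : ℝ) (h : ℝ → ℝ)
    (hC2 : ContDiffOn ℝ 2 h (Set.Ioo p q))
    (hd : ∀ x ∈ Set.Ioo p q, deriv h x ≠ 0)
    (hconv : ConvexOn ℝ (Set.Ioo p q) (fun x => 1 / Real.sqrt |deriv h x|)) :
    ∀ a b c d : ℝ, a ∈ Set.Ioo p q → b ∈ Set.Ioo p q → c ∈ Set.Ioo p q →
      d ∈ Set.Ioo p q →
      (a ≠ b ∧ a ≠ c ∧ a ≠ d ∧ b ≠ c ∧ b ≠ d ∧ c ≠ d) →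
      ((0 < (b - a) * (d - c) → 1 ≤ kappa h a b c d) ∧
        0 ≤ Real.log (kappa h a b c d) / ((b - a) * (d - c))) := by
  rintro a b c d ha hb hc hd' ⟨-, hac, had, hbc, hbd, -⟩
  have hdiff : DifferentiableOn ℝ h (Ioo p q) := hC2.differentiableOn (by norm_num)
  wlog hpos : ∀ x ∈ Ioo p q, 0 < deriv h x generalizing h
  · have hneg := (hasDerivWithinAt_forall_lt_or_forall_gt_of_forall_ne (convex_Ioo p q)
      (fun x hx => (hdiff.differentiableAt (isOpen_Ioo.mem_nhds hx)).hasDerivAt.hasDerivWithinAt)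
      hd).resolve_right hpos
    have := this (fun x => -h x) hC2.neg (by simpa using hd) (by simpa using hconv) hdiff.neg
      (by simpa using hneg)
    rwa [kappa_neg] at this
  rw [kappa_eq_exp_logDistortion hdiff hpos ha hb hc hd' hac had hbc hbd, log_exp]
  have hG := logDistortion_mul_nonneg hdiff hpos hconv ha hb hc hd'
  refine ⟨fun hP => one_le_exp (nonneg_of_mul_nonneg_left hG hP), ?_⟩
  exact div_nonneg_iff.2 (mul_nonneg_iff.1 hG)

/-- If `h` is a C² diffeomorphism of an open interval such that `1/√|h'|` is
convex, then `κ_h(a,b,c,d) ≥ 1` whenever `(b-a)(d-c) > 0`; equivalently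
`ρ_h(a,b,c,d) = log κ_h(a,b,c,d)/((b-a)(d-c)) ≥ 0` for all distinct points. -/
theorem kappa_ge_one_of_convex (p q : ℝ) (h : ℝ → ℝ)
    (hC2 : ContDiffOn ℝ 2 h (Set.Ioo p q))
    (hinj : Set.InjOn h (Set.Ioo p q))
    (hd : ∀ x ∈ Set.Ioo p q, deriv h x ≠ 0)
    (hconv : ConvexOn ℝ (Set.Ioo p q) (fun x => 1 / Real.sqrt |deriv h x|)) :
    ∀ a b c d : ℝ, a ∈ Set.Ioo p q → b ∈ Set.Ioo p q → c ∈ Set.Ioo p q →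
      d ∈ Set.Ioo p q →
      (a ≠ b ∧ a ≠ c ∧ a ≠ d ∧ b ≠ c ∧ b ≠ d ∧ c ≠ d) →
      ((0 < (b - a) * (d - c) → 1 ≤ kappa h a b c d) ∧
        0 ≤ Real.log (kappa h a b c d) / ((b - a) * (d - c))) :=
  kappa_ge_one_of_convex_general p q h hC2 hd hconv
end

section
/- Let I be a compact interval and h : I → h(I) a C² diffeomorphism. Then there exists a gauge function σ (continuous, increasing, σ(0)=0) such that for all distinct a,b,c,d in I, |log κ_h(a,b,c,d)| ≤ |b-a|·|σ(d-c)|. -/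
/-!
Write `h y - h x = (y - x) * g x y` with the divided difference
`g x y = ∫₀¹ h' (x + t (y - x)) dt`. For a `C²` diffeomorphism, `g` is `C¹` and does not vanish, and
`κ_h(a,b,c,d) = g b c * g a d / (g a c * g b d)`, so
`log κ_h(a,b,c,d) = ∫_a^b (∂ₓ log g (x, c) - ∂ₓ log g (x, d)) dx`.
The integrand is at most `ω |d - c|`, where `ω` is the modulus of continuity of the continuous
function `∂ₓ log g` on the compact square `I × I`. Finally any monotone `ω` with `ω 0⁺ = 0` lies
below a gauge, e.g. `t + (mean of ω over [t, 2t])` for `t ≥ 0`, extended oddly.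
To differentiate under the integral sign, `h` is first extended to a `C²` function on `ℝ`.
-/

open Set Filter Topology Function MeasureTheory

theorem ContDiffOn.exists_contDiff_eqOn_Icc {p q : ℝ} (hpq : p < q) :
    ∀ {n : ℕ} {f : ℝ → ℝ}, ContDiffOn ℝ n f (Icc p q) →
      ∃ F : ℝ → ℝ, ContDiff ℝ n F ∧ EqOn F f (Icc p q)
  | 0, f, hf => ⟨IccExtend hpq.le ((Icc p q).domRestrict f),
      contDiff_zero.2 hf.continuousOn.domRestrict.Icc_extend',
      fun _ hx => IccExtend_of_mem _ _ hx⟩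
  | n + 1, f, hf => by
    obtain ⟨F', hF', hF'f⟩ :=
      (hf.derivWithin (uniqueDiffOn_Icc hpq) le_rfl).exists_contDiff_eqOn_Icc hpq
    have hF : ∀ x, HasDerivAt (fun x => f p + ∫ t in p..x, F' t) (F' x) x := fun x =>
      ((hF'.continuous.integral_hasStrictDerivAt p x).hasDerivAt).const_add _
    refine ⟨fun x => f p + ∫ t in p..x, F' t, ?_, fun x hx => ?_⟩
    · have : ContDiff ℝ (n + 1) fun x => f p + ∫ t in p..x, F' t := by
        refine contDiff_succ_iff_deriv.2 ⟨fun x => (hF x).differentiableAt, by simp, ?_⟩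
        rwa [funext fun x => (hF x).deriv]
      exact_mod_cast this
    · have hsub : Icc p x ⊆ Icc p q := Icc_subset_Icc_right hx.2
      have hderiv : ∀ t ∈ Ioo p x, HasDerivAt f (F' t) t := fun t ht => by
        have htI : Icc p q ∈ 𝓝 t := Icc_mem_nhds ht.1 (ht.2.trans_le hx.2)
        rw [hF'f (mem_of_mem_nhds htI)]
        exact ((hf.differentiableOn (by simp)) t
          (mem_of_mem_nhds htI)).hasDerivWithinAt.hasDerivAt htI
      beta_reduce
      rw [intervalIntegral.integral_eq_sub_of_hasDerivAt_of_le hx.1 (hf.continuousOn.mono hsub)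
        hderiv (hF'.continuous.intervalIntegrable p x)]
      ring

theorem hasDerivAt_intervalIntegral_of_continuous {E : Type*} [NormedAddCommGroup E]
    [NormedSpace ℝ E] [CompleteSpace E] {F F' : ℝ → ℝ → E} {a b : ℝ}
    (hF : Continuous (uncurry F)) (hF' : Continuous (uncurry F'))
    (hderiv : ∀ x t, HasDerivAt (F · t) (F' x t) x) (x₀ : ℝ) :
    HasDerivAt (fun x => ∫ t in a..b, F x t) (∫ t in a..b, F' x₀ t) x₀ := by
  obtain ⟨C, hC⟩ :=
    ((isCompact_closedBall x₀ 1).prod isCompact_uIcc).exists_bound_of_continuousOn hF'.continuousOn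
  exact (intervalIntegral.hasDerivAt_integral_of_dominated_loc_of_deriv_le (bound := fun _ => C)
    (Metric.closedBall_mem_nhds x₀ one_pos)
    (Eventually.of_forall fun x => (hF.uncurry_left x).aestronglyMeasurable)
    ((hF.uncurry_left x₀).intervalIntegrable a b) (hF'.uncurry_left x₀).aestronglyMeasurable
    (ae_of_all _ fun t ht x hx => hC (x, t) ⟨hx, uIoc_subset_uIcc ht⟩) intervalIntegrable_const
    (ae_of_all _ fun t _ x _ => hderiv x t)).2

-- the divided difference `[x, y]f`, written so that it is smooth across the diagonal
noncomputable def divDiff (f : ℝ → ℝ) (x y : ℝ) : ℝ :=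
  ∫ t in (0 : ℝ)..1, deriv f (x + t * (y - x))

noncomputable def divDiffDerivFst (f : ℝ → ℝ) (x y : ℝ) : ℝ :=
  ∫ t in (0 : ℝ)..1, deriv (deriv f) (x + t * (y - x)) * (1 - t)

section DividedDifference

variable {f : ℝ → ℝ}

theorem divDiff_self (x : ℝ) : divDiff f x x = deriv f x := by simp [divDiff]

theorem sub_eq_mul_divDiff (hf : ContDiff ℝ 1 f) (x y : ℝ) :
    f y - f x = (y - x) * divDiff f x y := by
  have hpath : ∀ t, HasDerivAt (fun t => f (x + t * (y - x)))
      ((y - x) * deriv f (x + t * (y - x))) t := fun t => by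
    simpa [mul_comm, comp_def] using (hf.differentiable one_ne_zero _).hasDerivAt.comp t
      (((hasDerivAt_id t).mul_const (y - x)).const_add x)
  rw [divDiff, ← intervalIntegral.integral_const_mul,
    intervalIntegral.integral_eq_sub_of_hasDerivAt (fun t _ => hpath t)]
  · simp
  · exact (by have := hf.continuous_deriv le_rfl; fun_prop : Continuous _).intervalIntegrable 0 1

theorem divDiff_ne_zero (hf : ContDiff ℝ 1 f) {s : Set ℝ} (hinj : InjOn f s)
    (hd : ∀ x ∈ s, deriv f x ≠ 0) {x y : ℝ} (hx : x ∈ s) (hy : y ∈ s) : divDiff f x y ≠ 0 := by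
  rcases eq_or_ne x y with rfl | hxy
  · rw [divDiff_self]
    exact hd x hx
  · intro h0
    have := sub_eq_mul_divDiff hf x y
    rw [h0, mul_zero, sub_eq_zero] at this
    exact hxy (hinj hx hy this.symm)

theorem continuous_divDiff (hf : ContDiff ℝ 1 f) :
    Continuous fun z : ℝ × ℝ => divDiff f z.1 z.2 := by
  have := hf.continuous_deriv le_rfl
  unfold divDiff
  fun_prop

theorem continuous_divDiffDerivFst (hf : ContDiff ℝ 2 f) :
    Continuous fun z : ℝ × ℝ => divDiffDerivFst f z.1 z.2 := by
  have := ((contDiff_succ_iff_deriv (n := 1)).1 hf).2.2.continuous_deriv le_rfl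
  unfold divDiffDerivFst
  fun_prop

theorem hasDerivAt_divDiff_fst (hf : ContDiff ℝ 2 f) (x y : ℝ) :
    HasDerivAt (divDiff f · y) (divDiffDerivFst f x y) x := by
  have hf' := ((contDiff_succ_iff_deriv (n := 1)).1 hf).2.2
  have := hf'.continuous_deriv le_rfl
  refine hasDerivAt_intervalIntegral_of_continuous
    (F := fun x t => deriv f (x + t * (y - x)))
    (F' := fun x t => deriv (deriv f) (x + t * (y - x)) * (1 - t))
    (by simp only [uncurry_def]; fun_prop) (by simp only [uncurry_def]; fun_prop)
    (fun x t => ?_) x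
  have hline : HasDerivAt (fun x => x + t * (y - x)) (1 - t) x :=
    ((hasDerivAt_id' x).add (((hasDerivAt_const x y).sub (hasDerivAt_id' x)).const_mul t)
      ).congr_deriv (by ring)
  exact (hf'.differentiable one_ne_zero _).hasDerivAt.comp x hline

theorem kappa_eq_divDiff (hf : ContDiff ℝ 1 f) {a b c d : ℝ} (hac : a ≠ c) (had : a ≠ d)
    (hbc : b ≠ c) (hbd : b ≠ d) :
    kappa f a b c d = divDiff f b c * divDiff f a d / (divDiff f a c * divDiff f b d) := by
  have hca : c - a ≠ 0 := sub_ne_zero.2 hac.symm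
  have hda : d - a ≠ 0 := sub_ne_zero.2 had.symm
  have hcb : c - b ≠ 0 := sub_ne_zero.2 hbc.symm
  have hdb : d - b ≠ 0 := sub_ne_zero.2 hbd.symm
  simp only [kappa, chi, sub_eq_mul_divDiff hf]
  field_simp

theorem logDeriv_divDiff (hf : ContDiff ℝ 2 f) (x y : ℝ) :
    logDeriv (divDiff f · y) x = divDiffDerivFst f x y / divDiff f x y := by
  rw [logDeriv_apply, (hasDerivAt_divDiff_fst hf x y).deriv]

theorem continuousOn_logDeriv_divDiff (hf : ContDiff ℝ 2 f) :
    ContinuousOn (fun z : ℝ × ℝ => logDeriv (divDiff f · z.2) z.1)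
      {z | divDiff f z.1 z.2 ≠ 0} := by
  simp_rw [logDeriv_divDiff hf]
  exact (continuous_divDiffDerivFst hf).continuousOn.div
    (continuous_divDiff (hf.of_le one_le_two)).continuousOn fun _ hz => hz

theorem intervalIntegrable_logDeriv_divDiff (hf : ContDiff ℝ 2 f) {a b y : ℝ}
    (hne : ∀ x ∈ uIcc a b, divDiff f x y ≠ 0) :
    IntervalIntegrable (logDeriv (divDiff f · y)) volume a b :=
  ((continuousOn_logDeriv_divDiff hf).comp (Continuous.prodMk_left y).continuousOn
    hne).intervalIntegrable

theorem log_divDiff_sub_log_divDiff (hf : ContDiff ℝ 2 f) {a b y : ℝ}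
    (hne : ∀ x ∈ uIcc a b, divDiff f x y ≠ 0) :
    Real.log (divDiff f b y) - Real.log (divDiff f a y) =
      ∫ x in a..b, logDeriv (divDiff f · y) x := by
  refine (intervalIntegral.integral_eq_sub_of_hasDerivAt (f := fun x => Real.log (divDiff f x y))
    (fun x hx => ?_) (intervalIntegrable_logDeriv_divDiff hf hne)).symm
  rw [logDeriv_divDiff hf]
  exact (hasDerivAt_divDiff_fst hf x y).log (hne x hx)

theorem log_kappa_eq_integral (hf : ContDiff ℝ 2 f) {a b c d : ℝ} (hac : a ≠ c) (had : a ≠ d)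
    (hbc : b ≠ c) (hbd : b ≠ d) (hc : ∀ x ∈ uIcc a b, divDiff f x c ≠ 0)
    (hd : ∀ x ∈ uIcc a b, divDiff f x d ≠ 0) :
    Real.log (kappa f a b c d) =
      ∫ x in a..b, (logDeriv (divDiff f · c) x - logDeriv (divDiff f · d) x) := by
  have hac' := hc a left_mem_uIcc
  have hbc' := hc b right_mem_uIcc
  have had' := hd a left_mem_uIcc
  have hbd' := hd b right_mem_uIcc
  rw [kappa_eq_divDiff (hf.of_le one_le_two) hac had hbc hbd,
    Real.log_div (mul_ne_zero hbc' had') (mul_ne_zero hac' hbd'), Real.log_mul hbc' had',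
    Real.log_mul hac' hbd', intervalIntegral.integral_sub
      (intervalIntegrable_logDeriv_divDiff hf hc) (intervalIntegrable_logDeriv_divDiff hf hd),
    ← log_divDiff_sub_log_divDiff hf hc, ← log_divDiff_sub_log_divDiff hf hd]
  ring

end DividedDifference

-- `sSup ∅ = 0` makes this vanish for `δ < 0`
noncomputable def modulusOfContinuityOn {α β : Type*} [PseudoMetricSpace α]
    [PseudoMetricSpace β] (f : α → β) (s : Set α) (δ : ℝ) : ℝ :=
  sSup {r | ∃ x ∈ s, ∃ y ∈ s, dist x y ≤ δ ∧ dist (f x) (f y) = r}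

section ModulusOfContinuity

variable {α β : Type*} [PseudoMetricSpace α] [PseudoMetricSpace β] {f : α → β} {s : Set α}

theorem modulusOfContinuityOn_nonneg (δ : ℝ) : 0 ≤ modulusOfContinuityOn f s δ :=
  Real.sSup_nonneg <| by rintro _ ⟨x, -, y, -, -, rfl⟩; exact dist_nonneg

theorem bddAbove_modulusOfContinuityOn (hs : IsCompact s) (hf : ContinuousOn f s) (δ : ℝ) :
    BddAbove {r | ∃ x ∈ s, ∃ y ∈ s, dist x y ≤ δ ∧ dist (f x) (f y) = r} := by
  obtain ⟨C, hC⟩ := Metric.isBounded_iff.1 (hs.image_of_continuousOn hf).isBounded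
  refine ⟨C, ?_⟩
  rintro _ ⟨x, hx, y, hy, -, rfl⟩
  exact hC (mem_image_of_mem f hx) (mem_image_of_mem f hy)

theorem dist_le_modulusOfContinuityOn (hs : IsCompact s) (hf : ContinuousOn f s) {x y : α}
    (hx : x ∈ s) (hy : y ∈ s) : dist (f x) (f y) ≤ modulusOfContinuityOn f s (dist x y) :=
  le_csSup (bddAbove_modulusOfContinuityOn hs hf _) ⟨x, hx, y, hy, le_rfl, rfl⟩

theorem monotone_modulusOfContinuityOn (hs : IsCompact s) (hf : ContinuousOn f s) :
    Monotone (modulusOfContinuityOn f s) := by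
  intro δ ε hδε
  rcases eq_empty_or_nonempty {r | ∃ x ∈ s, ∃ y ∈ s, dist x y ≤ δ ∧ dist (f x) (f y) = r}
    with h | h
  · rw [modulusOfContinuityOn, h, Real.sSup_empty]
    exact modulusOfContinuityOn_nonneg ε
  · refine csSup_le_csSup (bddAbove_modulusOfContinuityOn hs hf ε) h ?_
    rintro _ ⟨x, hx, y, hy, hxy, rfl⟩
    exact ⟨x, hx, y, hy, hxy.trans hδε, rfl⟩

end ModulusOfContinuity

section ModulusOfContinuityMetric

variable {α β : Type*} [MetricSpace α] [PseudoMetricSpace β] {f : α → β} {s : Set α}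

theorem modulusOfContinuityOn_zero : modulusOfContinuityOn f s 0 = 0 := by
  refine le_antisymm (Real.sSup_nonpos ?_) (modulusOfContinuityOn_nonneg 0)
  rintro _ ⟨x, -, y, -, hxy, rfl⟩
  rw [dist_le_zero.1 hxy, dist_self]

theorem continuousWithinAt_modulusOfContinuityOn (hs : IsCompact s) (hf : ContinuousOn f s) :
    ContinuousWithinAt (modulusOfContinuityOn f s) (Ici 0) 0 := by
  rw [Metric.continuousWithinAt_iff]
  intro ε hε
  obtain ⟨δ, hδ, hfδ⟩ := Metric.uniformContinuousOn_iff.1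
    (hs.uniformContinuousOn_of_continuous hf) (ε / 2) (half_pos hε)
  refine ⟨δ, hδ, fun t _ ht => ?_⟩
  rw [modulusOfContinuityOn_zero, dist_zero_right,
    Real.norm_of_nonneg (modulusOfContinuityOn_nonneg t)]
  refine (Real.sSup_le ?_ (half_pos hε).le).trans_lt (half_lt_self hε)
  rintro _ ⟨x, hx, y, hy, hxy, rfl⟩
  exact (hfδ x hx y hy (hxy.trans_lt ((le_abs_self t).trans_lt (by simpa using ht)))).le

end ModulusOfContinuityMetric

-- the mean of `m` over `[t, 2 t]`
noncomputable def dilationAverage (m : ℝ → ℝ) (t : ℝ) : ℝ := ∫ s in (1 : ℝ)..2, m (t * s)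

section Gauge

variable {m : ℝ → ℝ}

theorem dilationAverage_mem_Icc (hm : Monotone m) {t : ℝ} (ht : 0 ≤ t) :
    dilationAverage m t ∈ Icc (m t) (m (2 * t)) := by
  have hint : IntervalIntegrable (fun s => m (t * s)) volume 1 2 :=
    (hm.comp (monotone_mul_left_of_nonneg ht)).intervalIntegrable
  constructor
  · have := intervalIntegral.integral_mono_on one_le_two intervalIntegrable_const hint
      fun s hs => hm (le_mul_of_one_le_right ht hs.1)
    norm_num at this
    exact this
  · have := intervalIntegral.integral_mono_on one_le_two hint intervalIntegrable_const
      fun s hs => hm (mul_le_mul_of_nonneg_left hs.2 ht)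
    norm_num at this
    rwa [mul_comm 2 t]

theorem monotoneOn_dilationAverage (hm : Monotone m) : MonotoneOn (dilationAverage m) (Ici 0) :=
  fun _ hs _ _ hst => intervalIntegral.integral_mono_on one_le_two
    (hm.comp (monotone_mul_left_of_nonneg hs)).intervalIntegrable
    (hm.comp (monotone_mul_left_of_nonneg (hs.trans hst))).intervalIntegrable
    fun _ hu => hm (mul_le_mul_of_nonneg_right hst (zero_le_one.trans hu.1))

theorem continuousOn_dilationAverage (hm : Monotone m) (hm0 : m 0 = 0)
    (hc : ContinuousWithinAt m (Ici 0) 0) : ContinuousOn (dilationAverage m) (Ici 0) := by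
  intro t ht
  rcases (mem_Ici.1 ht).eq_or_lt with rfl | ht
  · have h0 : dilationAverage m 0 = 0 := by simp [dilationAverage, hm0]
    have hdouble : Tendsto (fun t : ℝ => 2 * t) (𝓝[≥] 0) (𝓝[≥] 0) :=
      tendsto_nhdsWithin_of_tendsto_nhds_of_eventually_within _
        ((Continuous.tendsto' (by fun_prop) 0 0 (by simp)).mono_left nhdsWithin_le_nhds)
        (by filter_upwards [self_mem_nhdsWithin] with t ht using by simpa using ht)
    have hlim : Tendsto (fun t => m (2 * t)) (𝓝[≥] 0) (𝓝 0) := by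
      simpa [hm0, Function.comp_def] using hc.tendsto.comp hdouble
    rw [ContinuousWithinAt, h0]
    refine tendsto_of_tendsto_of_tendsto_of_le_of_le' (by simpa [hm0] using hc.tendsto) hlim
      ?_ ?_ <;> filter_upwards [self_mem_nhdsWithin] with t ht
    · exact (dilationAverage_mem_Icc hm ht).1
    · exact (dilationAverage_mem_Icc hm ht).2
  · have hprim := intervalIntegral.continuous_primitive (μ := volume)
      (fun _ _ => hm.intervalIntegrable) 0
    have heq : (fun t => t⁻¹ * ((∫ u in (0 : ℝ)..2 * t, m u) - ∫ u in (0 : ℝ)..t, m u))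
        =ᶠ[𝓝 t] dilationAverage m := by
      filter_upwards [lt_mem_nhds ht] with s hs
      rw [dilationAverage, intervalIntegral.integral_comp_mul_left _ hs.ne',
        intervalIntegral.integral_interval_sub_left hm.intervalIntegrable hm.intervalIntegrable]
      simp [mul_comm]
    refine (ContinuousAt.congr ?_ heq).continuousWithinAt
    exact (continuousAt_inv₀ ht.ne').mul
      ((hprim.comp (continuous_const.mul continuous_id)).sub hprim).continuousAt

theorem exists_strictMono_abs_ge (hm : Monotone m) (hm0 : m 0 = 0)
    (hc : ContinuousWithinAt m (Ici 0) 0) :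
    ∃ σ : ℝ → ℝ, Continuous σ ∧ StrictMono σ ∧ σ 0 = 0 ∧ ∀ t, m |t| ≤ |σ t| := by
  set τ : ℝ → ℝ := fun t => t + dilationAverage m t
  have hτc : ContinuousOn τ (Ici 0) :=
    continuousOn_id.add (continuousOn_dilationAverage hm hm0 hc)
  have hτm : StrictMonoOn τ (Ici 0) := fun s hs t ht hst =>
    add_lt_add_of_lt_of_le hst (monotoneOn_dilationAverage hm hs ht hst.le)
  have hτ0 : τ 0 = 0 := by simp [τ, dilationAverage, hm0]
  have hτge : ∀ t, 0 ≤ t → m t ≤ τ t := fun t ht =>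
    (dilationAverage_mem_Icc hm ht).1.trans (le_add_of_nonneg_left ht)
  -- glue `τ` on `[0, ∞)` with `-τ (-·)` on `(-∞, 0]`
  refine ⟨fun t => τ (max t 0) - τ (max (-t) 0), ?_, ?_, by simp [hτ0], ?_⟩
  · have hpos : Continuous fun t : ℝ => max t 0 := by fun_prop
    exact (hτc.comp_continuous hpos fun t => le_max_right t 0).sub
      (hτc.comp_continuous (by fun_prop) fun t => le_max_right (-t) 0)
  · intro s t hst
    have h₁ : τ (max s 0) ≤ τ (max t 0) :=
      hτm.monotoneOn (le_max_right s 0) (le_max_right t 0) (max_le_max hst.le le_rfl)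
    have h₂ : τ (max (-t) 0) ≤ τ (max (-s) 0) := hτm.monotoneOn (le_max_right (-t) 0)
      (le_max_right (-s) 0) (max_le_max (neg_le_neg hst.le) le_rfl)
    rcases lt_or_ge 0 t with ht | ht
    · have := hτm (le_max_right s 0) (le_max_right t 0) (by simpa [ht.le] using ⟨hst, ht⟩)
      linarith
    · have := hτm (le_max_right (-t) 0) (le_max_right (-s) 0)
        (by rw [max_eq_left (neg_nonneg.2 ht), max_eq_left (by linarith)]; linarith)
      linarith
  · intro t
    beta_reduce
    rcases le_total 0 t with ht | ht
    · rw [max_eq_left ht, max_eq_right (neg_nonpos.2 ht), hτ0, sub_zero, abs_of_nonneg ht]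
      exact (hτge t ht).trans (le_abs_self _)
    · rw [max_eq_right ht, max_eq_left (neg_nonneg.2 ht), hτ0, zero_sub, abs_neg,
        abs_of_nonpos ht]
      exact (hτge (-t) (neg_nonneg.2 ht)).trans (le_abs_self _)

end Gauge

/-- For a C² diffeomorphism `h` of a compact interval there exists a gauge
function `σ` (continuous, increasing, `σ(0)=0`) such that
`|log κ_h(a,b,c,d)| ≤ |b-a|·|σ(d-c)|` for all distinct points `a,b,c,d`. -/
theorem exists_gauge_bound (p q : ℝ) (hpq : p < q) (h : ℝ → ℝ)
    (hC2 : ContDiffOn ℝ 2 h (Set.Icc p q))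
    (hinj : Set.InjOn h (Set.Icc p q))
    (hd : ∀ x ∈ Set.Icc p q, derivWithin h (Set.Icc p q) x ≠ 0) :
    ∃ σ : ℝ → ℝ, Continuous σ ∧ StrictMono σ ∧ σ 0 = 0 ∧
      ∀ a b c d : ℝ, a ∈ Set.Icc p q → b ∈ Set.Icc p q → c ∈ Set.Icc p q →
        d ∈ Set.Icc p q → (a ≠ b ∧ a ≠ c ∧ a ≠ d ∧ b ≠ c ∧ b ≠ d ∧ c ≠ d) →
        |Real.log (kappa h a b c d)| ≤ |b - a| * |σ (d - c)| := by
  set I := Icc p q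
  obtain ⟨H, hH, hHh⟩ : ∃ H, ContDiff ℝ 2 H ∧ EqOn H h I :=
    ContDiffOn.exists_contDiff_eqOn_Icc hpq (n := 2) hC2
  have hH1 : ContDiff ℝ 1 H := hH.of_le (by norm_num)
  have hderiv : ∀ x ∈ I, deriv H x ≠ 0 := fun x hx => by
    rw [← (hH1.differentiable one_ne_zero x).derivWithin (uniqueDiffOn_Icc hpq x hx),
      derivWithin_congr hHh (hHh hx)]
    exact hd x hx
  have hne : ∀ x ∈ I, ∀ y ∈ I, divDiff H x y ≠ 0 := fun x hx y hy =>
    divDiff_ne_zero hH1 (hinj.congr hHh.symm) hderiv hx hy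
  set Q : ℝ × ℝ → ℝ := fun z => logDeriv (divDiff H · z.2) z.1
  have hQ : ContinuousOn Q (I ×ˢ I) :=
    (continuousOn_logDeriv_divDiff hH).mono fun z hz => hne _ hz.1 _ hz.2
  have hK : IsCompact (I ×ˢ I) := isCompact_Icc.prod isCompact_Icc
  obtain ⟨σ, hσc, hσm, hσ0, hσ⟩ := exists_strictMono_abs_ge
    (monotone_modulusOfContinuityOn hK hQ) modulusOfContinuityOn_zero
    (continuousWithinAt_modulusOfContinuityOn hK hQ)
  refine ⟨σ, hσc, hσm, hσ0, fun a b c d ha hb hc hd' ⟨_, hac, had, hbc, hbd, _⟩ => ?_⟩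
  have hab : uIcc a b ⊆ I := uIcc_subset_Icc ha hb
  have hκ : kappa h a b c d = kappa H a b c d := by
    simp only [kappa, hHh ha, hHh hb, hHh hc, hHh hd']
  have hbound : ∀ x ∈ uIoc a b,
      ‖Q (x, c) - Q (x, d)‖ ≤ modulusOfContinuityOn Q (I ×ˢ I) |d - c| := by
    intro x hx
    have hxI := hab (uIoc_subset_uIcc hx)
    simpa [← dist_eq_norm, Prod.dist_eq, Real.dist_eq, abs_sub_comm] using
      dist_le_modulusOfContinuityOn hK hQ (x := (x, c)) (y := (x, d)) ⟨hxI, hc⟩ ⟨hxI, hd'⟩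
  rw [hκ, log_kappa_eq_integral hH hac had hbc hbd
    (fun x hx => hne x (hab hx) c hc) (fun x hx => hne x (hab hx) d hd')]
  calc _ ≤ modulusOfContinuityOn Q (I ×ˢ I) |d - c| * |b - a| :=
        intervalIntegral.norm_integral_le_of_norm_le_const hbound
    _ ≤ |σ (d - c)| * |b - a| := by gcongr; exact hσ _
    _ = |b - a| * |σ (d - c)| := mul_comm _ _
end

section
/- Let I be a compact interval, f : I → I a unimodal map with critical point ζ. If f does not have arbitrarily small regularly returning symmetric open intervals containing ζ, then ζ is periodic. -/
open Set Function

private lemma iterMem {p q : ℝ} {f : ℝ → ℝ} (hmaps : MapsTo f (Icc p q) (Icc p q))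
    {x : ℝ} (hx : x ∈ Icc p q) (n : ℕ) : f^[n] x ∈ Icc p q :=
  (hmaps.iterate n) hx

/-- Max of a periodic orbit gives a point all of whose iterates lie below it. -/
private lemma orbitMax {p q c : ℝ} {f : ℝ → ℝ}
    (hmaps : MapsTo f (Icc p q) (Icc p q))
    (hle : ∀ x ∈ Icc p q, f x ≤ c)
    (hcper : ∀ m : ℕ, 0 < m → f^[m] c < c)
    {z : ℝ} (hz : z ∈ Icc p q) (hzc : z < c) {m : ℕ} (hm : 0 < m)
    (hfix : f^[m] z = z) :
    ∃ t, z ≤ t ∧ t < c ∧ ∀ k : ℕ, 0 < k → f^[k] t ≤ t := by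
  have hmul : ∀ d : ℕ, f^[m * d] z = z := by
    intro d
    induction d with
    | zero => simp
    | succ d ih =>
      rw [Nat.mul_succ, Function.iterate_add_apply, hfix, ih]
  have hmod : ∀ k : ℕ, f^[k] z = f^[k % m] z := by
    intro k
    conv_lhs => rw [← Nat.mod_add_div k m]
    rw [Function.iterate_add_apply, hmul]
  have hSne : ((Finset.range m).image (fun j => f^[j] z)).Nonempty :=
    ⟨f^[0] z, Finset.mem_image.mpr ⟨0, Finset.mem_range.mpr hm, rfl⟩⟩
  set t := ((Finset.range m).image (fun j => f^[j] z)).max' hSne with ht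
  have hmem' := Finset.max'_mem ((Finset.range m).image (fun j => f^[j] z)) hSne
  rw [Finset.mem_image] at hmem'
  obtain ⟨j₀, hj₀, hj₀t⟩ := hmem'
  rw [← ht] at hj₀t
  have hallk : ∀ k : ℕ, f^[k] z ≤ t := by
    intro k
    rw [hmod k]
    exact Finset.le_max' ((Finset.range m).image (fun j => f^[j] z)) (f^[k % m] z)
      (Finset.mem_image.mpr ⟨k % m, Finset.mem_range.mpr (Nat.mod_lt k hm), rfl⟩)
  have htz : z ≤ t := by simpa using hallk 0
  have hfixt : f^[m] t = t := by
    rw [← hj₀t, ← Function.iterate_add_apply, Nat.add_comm, Function.iterate_add_apply,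
      hfix]
  have htltc : t < c := by
    rcases Nat.eq_zero_or_pos j₀ with rfl | hj₀pos
    · simpa [← hj₀t] using hzc
    · have : t ≤ c := by
        obtain ⟨j', rfl⟩ : ∃ j', j₀ = j' + 1 := ⟨j₀ - 1, (Nat.succ_pred_eq_of_pos hj₀pos).symm⟩
        rw [← hj₀t, Function.iterate_succ_apply']
        exact hle _ (iterMem hmaps hz j')
      rcases lt_or_eq_of_le this with h | h
      · exact h
      · exfalso
        have := hcper m hm
        rw [← h, hfixt] at this
        exact lt_irrefl _ this
  refine ⟨t, htz, htltc, ?_⟩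
  intro k hk
  rw [← hj₀t, ← Function.iterate_add_apply]
  rw [hj₀t]
  exact hallk (k + j₀)

/-- Near (below) the critical value there is always a point dominating its orbit,
provided the critical value's orbit stays strictly below it. -/
private lemma APoint {p q c : ℝ} {f : ℝ → ℝ} (hfc : Continuous f)
    (hmaps : MapsTo f (Icc p q) (Icc p q))
    (hle : ∀ x ∈ Icc p q, f x ≤ c)
    (hcper : ∀ m : ℕ, 0 < m → f^[m] c < c)
    (hcI : c ∈ Icc p q)
    {t₀ : ℝ} (ht₀ : t₀ ∈ Icc p q) (ht₀c : t₀ < c) :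
    ∃ t, t₀ ≤ t ∧ t < c ∧ ∀ k : ℕ, 0 < k → f^[k] t ≤ t := by
  by_cases h : ∀ k : ℕ, 0 < k → f^[k] t₀ ≤ t₀
  · exact ⟨t₀, le_rfl, ht₀c, h⟩
  push_neg at h
  obtain ⟨m, hm, hmt⟩ := h
  have hgc : ContinuousOn (fun x => f^[m] x - x) (Icc t₀ c) :=
    ((hfc.iterate m).sub continuous_id).continuousOn
  have h0 : (0:ℝ) ∈ Icc (f^[m] c - c) (f^[m] t₀ - t₀) :=
    ⟨by linarith [hcper m hm], by linarith⟩
  obtain ⟨z, hzmem, hz0⟩ := intermediate_value_Icc' ht₀c.le hgc h0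
  have hfix : f^[m] z = z := by
    have : f^[m] z - z = 0 := hz0
    linarith
  have hzI : z ∈ Icc p q := ⟨le_trans ht₀.1 hzmem.1, le_trans hzmem.2 hcI.2⟩
  have hzc : z < c := by
    rcases lt_or_eq_of_le hzmem.2 with h' | h'
    · exact h'
    · exfalso
      have := hcper m hm
      rw [← h', hfix] at this
      exact lt_irrefl _ this
  obtain ⟨t, hzt, htc, htA⟩ := orbitMax hmaps hle hcper hzI hzc hm hfix
  exact ⟨t, le_trans hzmem.1 hzt, htc, htA⟩

/-- Core lemma: a continuous map on `[p,q]`, strictly increasing left of `ζ` and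
strictly decreasing right of it, with `ζ` non-periodic, has arbitrarily small
regularly returning symmetric intervals around `ζ`. -/
private lemma unimodalCore (p q : ℝ) (f : ℝ → ℝ) (ζ : ℝ)
    (hfc : Continuous f)
    (hmaps : MapsTo f (Icc p q) (Icc p q))
    (hζ : ζ ∈ Ioo p q)
    (hmono : StrictMonoOn f (Icc p ζ))
    (hanti : StrictAntiOn f (Icc ζ q))
    (hnp : ∀ m : ℕ, 0 < m → f^[m] ζ ≠ ζ) :
    ∀ ε > (0:ℝ), ∃ u v : ℝ, u < ζ ∧ ζ < v ∧ v - u < ε ∧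
      Icc u v ⊆ Icc p q ∧
      (∀ n : ℕ, 0 < n → f^[n] u ∉ Ioo u v ∧ f^[n] v ∉ Ioo u v) ∧
      Ioo u v = Icc p q ∩ f ⁻¹' (f '' Ioo u v) := by
  intro ε hε
  have hζI : ζ ∈ Icc p q := ⟨hζ.1.le, hζ.2.le⟩
  have hcI : f ζ ∈ Icc p q := hmaps hζI
  -- f ζ is the strict maximum value
  have hlt : ∀ x ∈ Icc p q, x ≠ ζ → f x < f ζ := by
    intro x hx hne
    rcases lt_or_ge x ζ with h | h
    · exact hmono ⟨hx.1, h.le⟩ ⟨hζ.1.le, le_rfl⟩ h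
    · exact hanti ⟨le_rfl, hζ.2.le⟩ ⟨h, hx.2⟩ (lt_of_le_of_ne h (Ne.symm hne))
  have hle : ∀ x ∈ Icc p q, f x ≤ f ζ := by
    intro x hx
    rcases eq_or_ne x ζ with rfl | hne
    · exact le_rfl
    · exact (hlt x hx hne).le
  -- the orbit of the critical value stays strictly below it
  have hcper : ∀ m : ℕ, 0 < m → f^[m] (f ζ) < f ζ := by
    intro m hm
    obtain ⟨m', rfl⟩ : ∃ m', m = m' + 1 := ⟨m - 1, (Nat.succ_pred_eq_of_pos hm).symm⟩
    rw [Function.iterate_succ_apply']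
    have hmem : f^[m'] (f ζ) ∈ Icc p q := iterMem hmaps hcI m'
    refine hlt _ hmem ?_
    intro he
    refine hnp (m' + 1) (Nat.succ_pos _) ?_
    rw [Function.iterate_succ_apply]
    exact he
  -- the small bracketing interval
  set lo := max ((p + ζ) / 2) (ζ - ε / 3) with hlodef
  set hi := min ((ζ + q) / 2) (ζ + ε / 3) with hhidef
  have hplo : p < lo := lt_of_lt_of_le (by linarith [hζ.1]) (le_max_left _ _)
  have hloζ : lo < ζ := max_lt (by linarith [hζ.1]) (by linarith)
  have hζhi : ζ < hi := lt_min (by linarith [hζ.2]) (by linarith)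
  have hhiq : hi < q := lt_of_le_of_lt (min_le_left _ _) (by linarith [hζ.2])
  have hloI : lo ∈ Icc p q := ⟨hplo.le, le_trans hloζ.le hζ.2.le⟩
  have hhiI : hi ∈ Icc p q := ⟨le_trans hζ.1.le hζhi.le, hhiq.le⟩
  have hflo : f lo < f ζ := hlt lo hloI (ne_of_lt hloζ)
  have hfhi : f hi < f ζ := hlt hi hhiI (ne_of_gt hζhi)
  -- pick an A-point t between max (f lo) (f hi) and f ζ
  have ht₁c : max (f lo) (f hi) < f ζ := max_lt hflo hfhi
  have ht₀I : (max (f lo) (f hi) + f ζ) / 2 ∈ Icc p q := by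
    constructor
    · have : p ≤ f lo := (hmaps hloI).1
      have : p ≤ max (f lo) (f hi) := le_trans this (le_max_left _ _)
      linarith [hcI.1]
    · have := hcI.2
      linarith
  obtain ⟨t, ht₀t, htc, htA⟩ := APoint hfc hmaps hle hcper hcI ht₀I (by linarith)
  have htlo : f lo < t := by
    have : max (f lo) (f hi) < t := by
      have := le_max_left (f lo) (f hi)
      linarith
    exact lt_of_le_of_lt (le_max_left _ _) this
  have hthi : f hi < t := by
    have : max (f lo) (f hi) < t := by linarith
    exact lt_of_le_of_lt (le_max_right _ _) this
  -- find u and v by IVT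
  obtain ⟨u, huIoo, hut⟩ :=
    intermediate_value_Ioo hloζ.le (hfc.continuousOn (s := Icc lo ζ)) ⟨htlo, htc⟩
  obtain ⟨v, hvIoo, hvt⟩ :=
    intermediate_value_Ioo' hζhi.le (hfc.continuousOn (s := Icc ζ hi)) ⟨hthi, htc⟩
  have hpu : p < u := lt_trans hplo huIoo.1
  have huζ : u < ζ := huIoo.2
  have hζv : ζ < v := hvIoo.1
  have hvq : v < q := lt_trans hvIoo.2 hhiq
  -- characterization of the interval
  have K : ∀ x, x ∈ Ioo u v ↔ (x ∈ Icc p q ∧ t < f x) := by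
    intro x
    constructor
    · rintro ⟨hux, hxv⟩
      have hxI : x ∈ Icc p q := ⟨(lt_trans hpu hux).le, (lt_trans hxv hvq).le⟩
      refine ⟨hxI, ?_⟩
      rcases le_or_gt x ζ with hxζ | hxζ
      · have := hmono ⟨hpu.le, huζ.le⟩ ⟨hxI.1, hxζ⟩ hux
        rw [hut] at this
        exact this
      · have := hanti ⟨hxζ.le, hxI.2⟩ ⟨hζv.le, hvq.le⟩ hxv
        rw [hvt] at this
        exact this
    · rintro ⟨hxI, htx⟩
      constructor
      · by_contra hcon
        push_neg at hcon
        rcases eq_or_lt_of_le hcon with h | h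
        · rw [h, hut] at htx; exact lt_irrefl _ htx
        · have : f x < f u := hmono ⟨hxI.1, (lt_trans h huζ).le⟩ ⟨hpu.le, huζ.le⟩ h
          rw [hut] at this
          linarith
      · by_contra hcon
        push_neg at hcon
        rcases eq_or_lt_of_le hcon with h | h
        · rw [← h, hvt] at htx; exact lt_irrefl _ htx
        · have : f x < f v := hanti ⟨hζv.le, hvq.le⟩ ⟨(lt_trans hζv h).le, hxI.2⟩ h
          rw [hvt] at this
          linarith
  refine ⟨u, v, huζ, hζv, ?_, ?_, ?_, ?_⟩
  · -- size
    have h1 : ζ - ε / 3 ≤ lo := le_max_right _ _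
    have h2 : hi ≤ ζ + ε / 3 := min_le_right _ _
    have := huIoo.1
    have := hvIoo.2
    linarith
  · intro x hx
    exact ⟨le_trans hpu.le hx.1, le_trans hx.2 hvq.le⟩
  · -- regularly returning
    intro n hn
    constructor
    · intro hmem
      have h2 : f (f^[n] u) = f^[n] t := by
        calc f (f^[n] u) = f^[n + 1] u := (Function.iterate_succ_apply' f n u).symm
          _ = f^[n] (f u) := Function.iterate_succ_apply f n u
          _ = f^[n] t := by rw [hut]
      have := ((K _).mp hmem).2
      rw [h2] at this
      exact absurd this (not_lt.mpr (htA n hn))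
    · intro hmem
      have h2 : f (f^[n] v) = f^[n] t := by
        calc f (f^[n] v) = f^[n + 1] v := (Function.iterate_succ_apply' f n v).symm
          _ = f^[n] (f v) := Function.iterate_succ_apply f n v
          _ = f^[n] t := by rw [hvt]
      have := ((K _).mp hmem).2
      rw [h2] at this
      exact absurd this (not_lt.mpr (htA n hn))
  · -- symmetric
    ext x
    constructor
    · intro hx
      exact ⟨((K x).mp hx).1, ⟨x, hx, rfl⟩⟩
    · rintro ⟨hxI, y, hy, hyx⟩
      refine (K x).mpr ⟨hxI, ?_⟩
      have := ((K y).mp hy).2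
      rw [hyx] at this
      exact this

/-- If a unimodal map `f` of a compact interval `[p,q]` does not have arbitrarily
small regularly returning symmetric open intervals containing its critical point
`ζ`, then `ζ` is periodic. -/
theorem critical_point_periodic (p q : ℝ) (hpq : p < q) (f : ℝ → ℝ) (ζ : ℝ)
    (hC1 : ContDiff ℝ 1 f)
    (hmaps : Set.MapsTo f (Set.Icc p q) (Set.Icc p q))
    (hζ : ζ ∈ Set.Ioo p q)
    (hcrit : ∀ x ∈ Set.Icc p q, (deriv f x = 0 ↔ x = ζ))
    (hsign : ((∀ x ∈ Set.Ioo p ζ, 0 < deriv f x) ∧ ∀ x ∈ Set.Ioo ζ q, deriv f x < 0) ∨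
             ((∀ x ∈ Set.Ioo p ζ, deriv f x < 0) ∧ ∀ x ∈ Set.Ioo ζ q, 0 < deriv f x))
    (hbd : f '' {p, q} ⊆ {p, q})
    -- `f` does not have arbitrarily small regularly returning symmetric open
    -- intervals containing `ζ`:
    (hno : ¬ ∀ ε > (0:ℝ), ∃ u v : ℝ, u < ζ ∧ ζ < v ∧ v - u < ε ∧
        Set.Icc u v ⊆ Set.Icc p q ∧
        -- regularly returning: no forward iterate of the boundary meets the interval
        (∀ n : ℕ, 0 < n → f^[n] u ∉ Set.Ioo u v ∧ f^[n] v ∉ Set.Ioo u v) ∧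
        -- symmetric: J = f⁻¹(f(J)) (within the ambient interval)
        Set.Ioo u v = Set.Icc p q ∩ f ⁻¹' (f '' Set.Ioo u v)) :
    ∃ m : ℕ, 0 < m ∧ f^[m] ζ = ζ := by
  by_contra hper
  push_neg at hper
  have hper' : ∀ m : ℕ, 0 < m → f^[m] ζ ≠ ζ := hper
  apply hno
  have hfc : Continuous f := hC1.continuous
  rcases hsign with ⟨h1, h2⟩ | ⟨h1, h2⟩
  · -- maximum at ζ
    have hmono : StrictMonoOn f (Icc p ζ) :=
      strictMonoOn_of_deriv_pos (convex_Icc p ζ) hfc.continuousOn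
        (by rw [interior_Icc]; exact h1)
    have hanti : StrictAntiOn f (Icc ζ q) :=
      strictAntiOn_of_deriv_neg (convex_Icc ζ q) hfc.continuousOn
        (by rw [interior_Icc]; exact h2)
    exact unimodalCore p q f ζ hfc hmaps hζ hmono hanti hper'
  · -- minimum at ζ : conjugate by the reflection x ↦ p + q - x
    set g : ℝ → ℝ := fun x => p + q - f (p + q - x) with hg
    have hgc : Continuous g := by
      have : Continuous fun x : ℝ => p + q - x := by continuity
      exact this.comp (hfc.comp this)
    have refl_mem : ∀ x ∈ Icc p q, p + q - x ∈ Icc p q := by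
      intro x hx
      exact ⟨by linarith [hx.2], by linarith [hx.1]⟩
    have hgmaps : MapsTo g (Icc p q) (Icc p q) := by
      intro x hx
      exact refl_mem _ (hmaps (refl_mem x hx))
    have hζ' : p + q - ζ ∈ Ioo p q := ⟨by linarith [hζ.2], by linarith [hζ.1]⟩
    have hmono2 : StrictMonoOn f (Icc ζ q) :=
      strictMonoOn_of_deriv_pos (convex_Icc ζ q) hfc.continuousOn
        (by rw [interior_Icc]; exact h2)
    have hanti2 : StrictAntiOn f (Icc p ζ) :=
      strictAntiOn_of_deriv_neg (convex_Icc p ζ) hfc.continuousOn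
        (by rw [interior_Icc]; exact h1)
    have hgmono : StrictMonoOn g (Icc p (p + q - ζ)) := by
      intro x hx y hy hxy
      have hx' : p + q - x ∈ Icc ζ q := ⟨by linarith [hx.2], by linarith [hx.1]⟩
      have hy' : p + q - y ∈ Icc ζ q := ⟨by linarith [hy.2], by linarith [hy.1]⟩
      have := hmono2 hy' hx' (by linarith)
      simp only [hg]
      linarith
    have hganti : StrictAntiOn g (Icc (p + q - ζ) q) := by
      intro x hx y hy hxy
      have hx' : p + q - x ∈ Icc p ζ := ⟨by linarith [hx.2], by linarith [hx.1]⟩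
      have hy' : p + q - y ∈ Icc p ζ := ⟨by linarith [hy.2], by linarith [hy.1]⟩
      have := hanti2 hy' hx' (by linarith)
      simp only [hg]
      linarith
    have hgiter : ∀ (n : ℕ) (x : ℝ), g^[n] x = p + q - f^[n] (p + q - x) := by
      intro n
      induction n with
      | zero => intro x; simp
      | succ n ih =>
        intro x
        rw [Function.iterate_succ_apply, ih]
        have e1 : p + q - g x = f (p + q - x) := by simp only [hg]; ring
        rw [e1, ← Function.iterate_succ_apply]
    have hgnp : ∀ m : ℕ, 0 < m → g^[m] (p + q - ζ) ≠ (p + q - ζ) := by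
      intro m hm he
      apply hper' m hm
      rw [hgiter] at he
      have e : p + q - (p + q - ζ) = ζ := by ring
      rw [e] at he
      linarith [he]
    intro ε hε
    obtain ⟨u, v, h1', h2', h3', h4', h5', h6'⟩ :=
      unimodalCore p q g (p + q - ζ) hgc hgmaps hζ' hgmono hganti hgnp ε hε
    have huv : u ≤ v := by linarith
    have hpu : p ≤ u := (h4' ⟨le_rfl, huv⟩).1
    have hvq : v ≤ q := (h4' ⟨huv, le_rfl⟩).2
    have hmemIff : ∀ y : ℝ, y ∈ Ioo (p + q - v) (p + q - u) ↔ p + q - y ∈ Ioo u v := by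
      intro y
      constructor
      · intro h; exact ⟨by linarith [h.2], by linarith [h.1]⟩
      · intro h; exact ⟨by linarith [h.2], by linarith [h.1]⟩
    refine ⟨p + q - v, p + q - u, by linarith, by linarith, by linarith, ?_, ?_, ?_⟩
    · intro x hx
      exact ⟨by linarith [hx.1], by linarith [hx.2]⟩
    · intro n hn
      constructor
      · intro hcon
        rw [hmemIff] at hcon
        have e : p + q - f^[n] (p + q - v) = g^[n] v := by rw [hgiter]
        rw [e] at hcon
        exact (h5' n hn).2 hcon
      · intro hcon
        rw [hmemIff] at hcon
        have e : p + q - f^[n] (p + q - u) = g^[n] u := by rw [hgiter]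
        rw [e] at hcon
        exact (h5' n hn).1 hcon
    · ext x
      constructor
      · intro hx
        refine ⟨⟨by linarith [hx.1], by linarith [hx.2]⟩, ⟨x, hx, rfl⟩⟩
      · rintro ⟨hxI, y, hy, hyx⟩
        have hY : p + q - y ∈ Ioo u v := (hmemIff y).mp hy
        have hgy : g (p + q - y) = p + q - f y := by
          simp only [hg]
          have e : p + q - (p + q - y) = y := by ring
          rw [e]
        have hgx : g (p + q - x) = p + q - f x := by
          simp only [hg]
          have e : p + q - (p + q - x) = x := by ring
          rw [e]
        have hgeq : g (p + q - y) = g (p + q - x) := by rw [hgy, hgx, hyx]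
        have hX : p + q - x ∈ Ioo u v := by
          rw [h6']
          exact ⟨refl_mem x hxI, ⟨p + q - y, hY, hgeq⟩⟩
        exact ⟨by linarith [hX.2], by linarith [hX.1]⟩
end

section
/- Let f : I → I be a continuous interval map and U ⊆ I a regularly returning open interval. Then the first entry time function n(x) := min{n > 0 : fⁿ(x) ∈ U} is locally constant (hence continuous) on the set E_U := {x : ∃ n > 0, fⁿ(x) ∈ U}. -/
/-- For a continuous map `f` of a compact interval and a regularly returning open
interval `U`, the first entry time `n(x) = min {n > 0 : fⁿ(x) ∈ U}` is locally
constant on `E_U = {x : ∃ n > 0, fⁿ(x) ∈ U}`. -/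
theorem first_entry_time_locally_constant (p q : ℝ) (hpq : p < q) (f : ℝ → ℝ)
    (hcont : ContinuousOn f (Set.Icc p q))
    (hmaps : Set.MapsTo f (Set.Icc p q) (Set.Icc p q))
    (u v : ℝ) (huv : u < v) (hUsub : Set.Icc u v ⊆ Set.Icc p q)
    -- regularly returning: `fⁿ(∂U) ∩ U = ∅` for all `n > 0`
    (hrr : ∀ n : ℕ, 0 < n → f^[n] u ∉ Set.Ioo u v ∧ f^[n] v ∉ Set.Ioo u v) :
    ∀ x ∈ {x : ℝ | x ∈ Set.Icc p q ∧ ∃ n : ℕ, 0 < n ∧ f^[n] x ∈ Set.Ioo u v},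
      ∃ V : Set ℝ, V ∈ nhds x ∧
        ∀ y ∈ V ∩ {x : ℝ | x ∈ Set.Icc p q ∧ ∃ n : ℕ, 0 < n ∧ f^[n] x ∈ Set.Ioo u v},
          sInf {n : ℕ | 0 < n ∧ f^[n] y ∈ Set.Ioo u v} =
          sInf {n : ℕ | 0 < n ∧ f^[n] x ∈ Set.Ioo u v} := by
  -- iterates map Icc p q into itself and are continuous on it
  have hiter_maps : ∀ k : ℕ, Set.MapsTo f^[k] (Set.Icc p q) (Set.Icc p q) :=
    fun k => hmaps.iterate k
  have hiter_cont : ∀ k : ℕ, ContinuousOn f^[k] (Set.Icc p q) := by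
    intro k
    induction k with
    | zero => simpa using continuousOn_id
    | succ n ih =>
      rw [Function.iterate_succ']
      exact hcont.comp ih (hiter_maps n)
  rintro x ⟨hx, hEx⟩
  set S : ℝ → Set ℕ := fun z => {n : ℕ | 0 < n ∧ f^[n] z ∈ Set.Ioo u v} with hS
  have hSx : (S x).Nonempty := by
    obtain ⟨n, hn, hmem⟩ := hEx
    exact ⟨n, hn, hmem⟩
  set N : ℕ := sInf (S x) with hNdef
  have hNmem : N ∈ S x := Nat.sInf_mem hSx
  obtain ⟨hNpos, hNin⟩ := hNmem
  -- for 0 < k < N, f^[k] x avoids the closed interval [u, v]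
  have hkey : ∀ k : ℕ, 0 < k → k < N → f^[k] x ∉ Set.Icc u v := by
    intro k hk hkN hmem
    by_cases hIoo : f^[k] x ∈ Set.Ioo u v
    · have hkS : k ∈ S x := ⟨hk, hIoo⟩
      exact absurd (Nat.sInf_le hkS) (by omega)
    · -- f^[k] x is an endpoint; then f^[N] x = f^[N-k] of the endpoint ∈ Ioo u v
      have hiterN : f^[N - k] (f^[k] x) = f^[N] x := by
        rw [← Function.iterate_add_apply]
        congr 1
        omega
      have hendpoint : f^[k] x = u ∨ f^[k] x = v := by
        rcases hmem with ⟨h1, h2⟩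
        simp only [Set.mem_Ioo, not_and_or, not_lt] at hIoo
        rcases hIoo with h | h
        · left; linarith
        · right; linarith
      have hNk : 0 < N - k := by omega
      rcases hendpoint with h | h
      · rw [h] at hiterN
        exact (hrr (N - k) hNk).1 (by rw [hiterN]; exact hNin)
      · rw [h] at hiterN
        exact (hrr (N - k) hNk).2 (by rw [hiterN]; exact hNin)
  -- build neighborhoods for each k ≤ N
  have key : ∀ k : ℕ, ∃ V ∈ nhds x, ∀ y ∈ V ∩ Set.Icc p q,
      (0 < k ∧ k < N → f^[k] y ∉ Set.Icc u v) ∧ (k = N → f^[k] y ∈ Set.Ioo u v) := by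
    intro k
    by_cases hk : (0 < k ∧ k < N) ∨ k = N
    · -- choose the appropriate open target
      have : ∃ O : Set ℝ, IsOpen O ∧ f^[k] x ∈ O ∧
          ∀ z ∈ O, (0 < k ∧ k < N → z ∉ Set.Icc u v) ∧ (k = N → z ∈ Set.Ioo u v) := by
        rcases hk with ⟨hk1, hk2⟩ | hk3
        · refine ⟨(Set.Icc u v)ᶜ, isClosed_Icc.isOpen_compl, hkey k hk1 hk2, ?_⟩
          intro z hz
          exact ⟨fun _ => hz, fun hkN => by omega⟩
        · subst hk3
          refine ⟨Set.Ioo u v, isOpen_Ioo, hNin, ?_⟩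
          intro z hz
          exact ⟨fun h => by omega, fun _ => hz⟩
      obtain ⟨O, hOopen, hxO, hOprop⟩ := this
      have hc : ContinuousWithinAt f^[k] (Set.Icc p q) x :=
        (hiter_cont k).continuousWithinAt hx
      have hpre : f^[k] ⁻¹' O ∈ nhdsWithin x (Set.Icc p q) :=
        hc.preimage_mem_nhdsWithin (hOopen.mem_nhds hxO)
      rw [mem_nhdsWithin] at hpre
      obtain ⟨t, htopen, hxt, hts⟩ := hpre
      refine ⟨t, htopen.mem_nhds hxt, ?_⟩
      intro y hy
      exact hOprop _ (hts hy)
    · exact ⟨Set.univ, Filter.univ_mem, fun y _ =>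
        ⟨fun h => absurd (Or.inl h) hk, fun h => absurd (Or.inr h) hk⟩⟩
  choose V hVnhds hVprop using key
  refine ⟨⋂ k ∈ Finset.range (N + 1), V k, ?_, ?_⟩
  · exact (Filter.biInter_finset_mem _).mpr fun k _ => hVnhds k
  · rintro y ⟨hyV, hyq, hEy⟩
    have hyVk : ∀ k, k ≤ N → y ∈ V k := by
      intro k hk
      exact Set.mem_iInter₂.mp hyV k (Finset.mem_range.mpr (by omega))
    have hNy : N ∈ S y := by
      have := (hVprop N y ⟨hyVk N le_rfl, hyq⟩).2 rfl
      exact ⟨hNpos, this⟩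
    have hlow : ∀ m ∈ S y, N ≤ m := by
      intro m hm
      by_contra hlt
      push_neg at hlt
      have := (hVprop m y ⟨hyVk m (by omega), hyq⟩).1 ⟨hm.1, hlt⟩
      exact this (Set.Ioo_subset_Icc_self hm.2)
    exact le_antisymm (Nat.sInf_le hNy) (le_csInf ⟨N, hNy⟩ hlow)
end

section
/- Let I be a compact interval and f : I → I be C² and nonsingular. Then every metric attractor of f that contains no critical points is a topologically attracting periodic orbit, assuming that for Lebesgue almost every x either ω(x) contains a critical point or ω(x) is a nonrepelling periodic orbit. -/
/-!
For almost every `x` in the basin, `ω(x)` is all of `A`: otherwise `ω(x)`, being closed and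
forward invariant, avoids some open set `U` of a countable basis that meets `A`, hence lies in the
largest forward invariant subset of `A` avoiding `U`, a compact proper subset whose basin is null
by minimality. As `A` has no critical points, the hypothesis on typical `ω`-limit sets then makes
`A` a periodic orbit, say of period `m`.

By nonsingularity almost every point of the basin never lands in the finite set `A`; take one,
`x`. Under `g = f^[2m]`, which fixes `A` pointwise, the orbit of `x` converges to some `w ∈ A`
without reaching it. Since `A` has no critical points, `g' w = ((f^[m])' w)² > 0`, so `g` is
monotone near `w`, and the whole interval between `w` and a late point of the orbit of `x` is
attracted to `w`; this interval lies in the basin.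
-/

open MeasureTheory

/-- The ω-limit set of a point under iteration of `f`. -/
def omegaLimitPt (f : ℝ → ℝ) (x : ℝ) : Set ℝ :=
  {y | ∃ φ : ℕ → ℕ, StrictMono φ ∧
    Filter.Tendsto (fun n => f^[φ n] x) Filter.atTop (nhds y)}

/-- The orbit of a periodic point `z`. -/
def periodicOrbit (f : ℝ → ℝ) (z : ℝ) : Set ℝ := {w | ∃ k : ℕ, f^[k] z = w}

open Set Filter Topology

section OmegaLimit

variable {f : ℝ → ℝ} {x : ℝ}

theorem mem_omegaLimitPt_iff_mapClusterPt {y : ℝ} :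
    y ∈ omegaLimitPt f x ↔ MapClusterPt y atTop (fun n => f^[n] x) :=
  ⟨fun ⟨_, hφ, hy⟩ => hy.mapClusterPt.of_comp hφ.tendsto_atTop, MapClusterPt.tendsto_subseq⟩

theorem isClosed_omegaLimitPt : IsClosed (omegaLimitPt f x) := by
  rw [show omegaLimitPt f x = {y | MapClusterPt y atTop (fun n => f^[n] x)} from
    Set.ext fun _ => mem_omegaLimitPt_iff_mapClusterPt]
  exact isClosed_setOfPred_clusterPt

theorem mapsTo_omegaLimitPt {K : Set ℝ} (hK : IsClosed K) (hf : ContinuousOn f K)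
    (hfK : MapsTo f K K) (hx : x ∈ K) : MapsTo f (omegaLimitPt f x) (omegaLimitPt f x) := by
  rintro y ⟨φ, hφ, hy⟩
  have hyK : y ∈ K := hK.mem_of_tendsto hy (Eventually.of_forall fun n => hfK.iterate _ hx)
  refine ⟨fun n => φ n + 1, fun a b hab => Nat.succ_lt_succ (hφ hab), ?_⟩
  simp only [Function.iterate_succ_apply']
  exact (hf y hyK).tendsto.comp
    (tendsto_nhdsWithin_iff.2 ⟨hy, Eventually.of_forall fun n => hfK.iterate _ hx⟩)

theorem omegaLimitPt_subset_iff_tendsto_nhdsSet {K A : Set ℝ} (hK : IsCompact K)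
    (hxK : ∀ n, f^[n] x ∈ K) (hA : IsClosed A) :
    omegaLimitPt f x ⊆ A ↔ Tendsto (fun n => f^[n] x) atTop (𝓝ˢ A) := by
  refine ⟨fun h => hK.tendsto_nhdsSet_of_mapClusterPt (Eventually.of_forall hxK)
    fun y _ hy => h (mem_omegaLimitPt_iff_mapClusterPt.2 hy), fun h y hy => ?_⟩
  by_contra hyA
  have hdisj : Disjoint (𝓝ˢ A) (𝓝 y) := disjoint_nhdsSet_nhds.2 (by rwa [hA.closure_eq])
  exact clusterPt_iff_not_disjoint.1 (mem_omegaLimitPt_iff_mapClusterPt.1 hy)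
    (hdisj.symm.mono_right h)

end OmegaLimit

theorem ae_omegaLimitPt_eq_of_minimal {f : ℝ → ℝ} {K A : Set ℝ} {μ : Measure ℝ}
    (hK : IsClosed K) (hf : ContinuousOn f K) (hfK : MapsTo f K K) (hAK : A ⊆ K)
    (hAc : IsCompact A) (hAinv : MapsTo f A A)
    (hmin : ∀ A' ⊆ A, A' ≠ A → IsCompact A' → MapsTo f A' A' →
      μ {x ∈ K | omegaLimitPt f x ⊆ A'} = 0) :
    ∀ᵐ x ∂μ, x ∈ K → omegaLimitPt f x ⊆ A → omegaLimitPt f x = A := by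
  -- `core U` is the largest forward invariant subset of `A` avoiding `U`
  set core : Set ℝ → Set ℝ := fun U => ⋂ j : ℕ, A ∩ f^[j] ⁻¹' Uᶜ
  have hcore_null : ∀ U, IsOpen U → (U ∩ A).Nonempty →
      μ {x ∈ K | omegaLimitPt f x ⊆ core U} = 0 := by
    rintro U hU ⟨a, haU, haA⟩
    refine hmin _ (fun b hb => (mem_iInter.1 hb 0).1) (fun h => ?_) ?_ ?_
    · exact (mem_iInter.1 (h.symm ▸ haA : a ∈ core U) 0).2 haU
    · exact hAc.of_isClosed_subset (isClosed_iInter fun j => ((hf.mono hAK).iterate hAinv j)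
        |>.preimage_isClosed_of_isClosed hAc.isClosed hU.isClosed_compl)
        fun b hb => (mem_iInter.1 hb 0).1
    · intro b hb
      refine mem_iInter.2 fun j => ⟨hAinv (mem_iInter.1 hb 0).1, ?_⟩
      simpa only [mem_preimage, ← Function.iterate_succ_apply] using (mem_iInter.1 hb (j + 1)).2
  have hcover : {x | ¬(x ∈ K → omegaLimitPt f x ⊆ A → omegaLimitPt f x = A)} ⊆
      ⋃ U ∈ {U ∈ TopologicalSpace.countableBasis ℝ | (U ∩ A).Nonempty},
        {x ∈ K | omegaLimitPt f x ⊆ core U} := by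
    intro x hx
    simp only [mem_ofPred_eq, Classical.not_imp] at hx
    obtain ⟨hxK, hωA, hne⟩ := hx
    obtain ⟨d, hdA, hdω⟩ := exists_of_ssubset (ssubset_of_subset_of_ne hωA hne)
    obtain ⟨U, hUb, hdU, hUω⟩ := (TopologicalSpace.isBasis_countableBasis ℝ)
      |>.exists_subset_of_mem_open hdω isClosed_omegaLimitPt.isOpen_compl
    refine mem_iUnion₂.2 ⟨U, ⟨hUb, d, hdU, hdA⟩, hxK, fun y hy => mem_iInter.2 fun j => ?_⟩
    have hjy : f^[j] y ∈ omegaLimitPt f x := (mapsTo_omegaLimitPt hK hf hfK hxK).iterate j hy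
    exact ⟨hωA hy, fun hU => hUω hU hjy⟩
  refine ae_iff.2 (measure_mono_null hcover ?_)
  refine (measure_biUnion_null_iff
    ((TopologicalSpace.countable_countableBasis ℝ).mono (sep_subset _ _))).2 fun U hU => ?_
  exact hcore_null U (TopologicalSpace.isOpen_of_mem_countableBasis hU.1) hU.2

theorem periodicOrbit_finite {f : ℝ → ℝ} {z : ℝ} {m : ℕ} (hm : 0 < m) (hz : f^[m] z = z) :
    (periodicOrbit f z).Finite := by
  refine ((finite_Iio m).image fun k => f^[k] z).subset ?_
  rintro _ ⟨k, rfl⟩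
  exact ⟨k % m, Nat.mod_lt k hm, Function.IsPeriodicPt.iterate_mod_apply hz k⟩

theorem iterate_eq_self_of_mem_periodicOrbit {f : ℝ → ℝ} {z w : ℝ} {m : ℕ} (hz : f^[m] z = z)
    (hw : w ∈ periodicOrbit f z) : f^[m] w = w := by
  obtain ⟨k, rfl⟩ := hw
  exact Function.IsPeriodicPt.apply_iterate hz k

theorem measure_inter_preimage_iterate_eq_zero {α : Type*} [MeasurableSpace α] {μ : Measure α}
    {f : α → α} {s : Set α} (hfs : MapsTo f s s)
    (hns : ∀ B, MeasurableSet B → μ B = 0 → μ (s ∩ f ⁻¹' B) = 0) {N : Set α} (hN : μ N = 0)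
    (k : ℕ) : μ (s ∩ f^[k] ⁻¹' N) = 0 := by
  induction k generalizing N with
  | zero => exact measure_mono_null inter_subset_right hN
  | succ k ih =>
    have hsub : s ∩ f^[k + 1] ⁻¹' N ⊆ s ∩ f ⁻¹' toMeasurable μ (s ∩ f^[k] ⁻¹' N) :=
      fun x ⟨hx, hxN⟩ => ⟨hx, subset_toMeasurable _ _ ⟨hfs hx, hxN⟩⟩
    exact measure_mono_null hsub
      (hns _ (measurableSet_toMeasurable _ _) ((measure_toMeasurable _).trans (ih hN)))

theorem ae_forall_iterate_notMem {α : Type*} [MeasurableSpace α] {μ : Measure α} {f : α → α}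
    {s N : Set α} (hfs : MapsTo f s s)
    (hns : ∀ B, MeasurableSet B → μ B = 0 → μ (s ∩ f ⁻¹' B) = 0) (hN : μ N = 0) :
    ∀ᵐ x ∂μ, ∀ k, x ∈ s → f^[k] x ∉ N :=
  ae_all_iff.2 fun k => measure_mono_null (fun x hx => by simpa [Classical.not_imp] using hx)
    (measure_inter_preimage_iterate_eq_zero hfs hns hN k)

theorem tendsto_of_forall_tendsto_mul_add {α : Type*} {u : ℕ → α} {l : Filter α} {M : ℕ}
    (hM : 0 < M) (h : ∀ r < M, Tendsto (fun k => u (M * k + r)) atTop l) :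
    Tendsto u atTop l := by
  intro S hS
  obtain ⟨K, hK⟩ := eventually_atTop.1
    ((eventually_all_finite (finite_Iio M)).2 fun r hr => h r hr hS)
  refine mem_map.2 (mem_atTop_sets.2 ⟨M * K, fun n hn => ?_⟩)
  rw [← Nat.div_add_mod n M]
  exact hK (n / M) ((Nat.le_div_iff_mul_le hM).2 (mul_comm K M ▸ hn)) (n % M)
    (Nat.mod_lt n hM)

theorem exists_tendsto_of_tendsto_nhdsSet_finite {X : Type*} [TopologicalSpace X] [T2Space X]
    {A s : Set X} (hA : A.Finite) {g : X → X} (hgA : ∀ a ∈ A, g a = a)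
    (hg : ∀ a ∈ A, ContinuousWithinAt g s a) {y : ℕ → X} (hys : ∀ n, y n ∈ s)
    (hy : ∀ n, y (n + 1) = g (y n)) (hyA : Tendsto y atTop (𝓝ˢ A)) :
    ∃ a ∈ A, Tendsto y atTop (𝓝 a) := by
  -- Once `y n` lies in `U a` close enough to `a`, `y (n + 1) = g (y n)` is again in `U a`: the
  -- orbit cannot switch between the disjoint neighbourhoods `U a`.
  obtain ⟨U, hU, hdisj⟩ := hA.t2_separation
  have hV : {x | ∃ a ∈ A, x ∈ U a ∧ (x ∈ s → g x ∈ U a)} ∈ 𝓝ˢ A := by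
    refine mem_nhdsSet_iff_forall.2 fun a ha => ?_
    have hga : g ⁻¹' U a ∈ 𝓝[s] a := hg a ha ((hgA a ha).symm ▸ (hU a).2.mem_nhds (hU a).1)
    filter_upwards [(hU a).2.mem_nhds (hU a).1, mem_nhdsWithin_iff_eventually.1 hga]
      with x hxU hxg using ⟨a, ha, hxU, hxg⟩
  obtain ⟨N, hN⟩ := eventually_atTop.1 (hyA hV)
  obtain ⟨a, ha, hyNa, -⟩ := hN N le_rfl
  have hstay : ∀ n ≥ N, y n ∈ U a := by
    intro n hn
    induction n, hn using Nat.le_induction with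
    | base => exact hyNa
    | succ n hn ih =>
      obtain ⟨b, hb, hyb, hgb⟩ := hN n hn
      have hba : b = a := hdisj.elim hb ha (not_disjoint_iff.2 ⟨y n, hyb, ih⟩)
      exact hy n ▸ hba ▸ hgb (hys n)
  refine ⟨a, ha, fun W hW => ?_⟩
  have hW' : {x | x ∈ U a → x ∈ W} ∈ 𝓝ˢ A := by
    refine mem_nhdsSet_iff_forall.2 fun b hb => ?_
    rcases eq_or_ne b a with rfl | hba
    · filter_upwards [hW] with x hx _ using hx
    · filter_upwards [(hU b).2.mem_nhds (hU b).1] with x hxb hxa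
      exact absurd (hdisj hb ha hba) (not_disjoint_iff.2 ⟨x, hxb, hxa⟩)
  filter_upwards [hyA hW', eventually_atTop.2 ⟨N, hstay⟩] with n hn hna using hn hna

theorem tendsto_iterate_nhdsSet_of_tendsto_iterate_iterate {X : Type*} [TopologicalSpace X]
    {f : X → X} {s A : Set X} (hf : ContinuousOn f s) (hfs : MapsTo f s s) (hA : MapsTo f A A)
    {M : ℕ} (hM : 0 < M) {u w : X} (hu : u ∈ s) (hws : w ∈ s) (hwA : w ∈ A)
    (h : Tendsto (fun k => (f^[M])^[k] u) atTop (𝓝 w)) :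
    Tendsto (fun n => f^[n] u) atTop (𝓝ˢ A) := by
  refine tendsto_of_forall_tendsto_mul_add hM fun r _ => ?_
  have hwithin : Tendsto (fun k => (f^[M])^[k] u) atTop (𝓝[s] w) :=
    tendsto_nhdsWithin_iff.2 ⟨h, Eventually.of_forall fun k => (hfs.iterate M).iterate k hu⟩
  refine ((((hf.iterate hfs r) w hws).tendsto.comp hwithin).mono_right
    (nhds_le_nhdsSet (hA.iterate r hwA))).congr fun k => ?_
  rw [Function.comp_apply, ← Function.iterate_mul, ← Function.iterate_add_apply, add_comm]

theorem exists_tendsto_iterate_of_omegaLimitPt_subset {f : ℝ → ℝ} {K A : Set ℝ}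
    (hK : IsCompact K) (hf : ContinuousOn f K) (hfK : MapsTo f K K) (hA : A.Finite)
    (hAK : A ⊆ K) {M : ℕ} (hM : 0 < M) (hfixA : ∀ a ∈ A, f^[M] a = a) {x : ℝ} (hx : x ∈ K)
    (hωx : omegaLimitPt f x ⊆ A) :
    ∃ w ∈ A, Tendsto (fun n => (f^[M])^[n] x) atTop (𝓝 w) := by
  have horbit := (omegaLimitPt_subset_iff_tendsto_nhdsSet hK (fun n => hfK.iterate n hx)
    hA.isClosed).1 hωx
  refine exists_tendsto_of_tendsto_nhdsSet_finite hA hfixA (fun a ha => ?_)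
    (fun n => (hfK.iterate M).iterate n hx) (fun n => Function.iterate_succ_apply' _ n x) ?_
  · exact (hf.iterate hfK M) a (hAK ha)
  · refine (horbit.comp (tendsto_id.const_mul_atTop' hM)).congr fun n => ?_
    rw [Function.comp_apply, id, Function.iterate_mul]

protected theorem ContDiffOn.iterate {𝕜 E : Type*} [NontriviallyNormedField 𝕜]
    [NormedAddCommGroup E] [NormedSpace 𝕜 E] {f : E → E} {s : Set E} {n : WithTop ℕ∞}
    (hf : ContDiffOn 𝕜 n f s) (hfs : MapsTo f s s) : ∀ k, ContDiffOn 𝕜 n f^[k] s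
  | 0 => contDiffOn_id
  | k + 1 => (ContDiffOn.iterate hf hfs k).comp hf hfs

theorem derivWithin_iterate_ne_zero {𝕜 : Type*} [NontriviallyNormedField 𝕜] {f : 𝕜 → 𝕜}
    {s A : Set 𝕜} (hs : UniqueDiffOn 𝕜 s) (hf : DifferentiableOn 𝕜 f s) (hfs : MapsTo f s s)
    (hAs : A ⊆ s) (hA : MapsTo f A A) (hcrit : ∀ a ∈ A, derivWithin f s a ≠ 0) (k : ℕ) {a : 𝕜}
    (ha : a ∈ A) : derivWithin f^[k] s a ≠ 0 := by
  induction k generalizing a with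
  | zero => simp [derivWithin_id _ _ (hs a (hAs ha))]
  | succ k ih =>
    rw [Function.iterate_succ, derivWithin_comp a ((hf.iterate hfs k) _ (hfs (hAs ha)))
      (hf a (hAs ha)) hfs]
    exact mul_ne_zero (ih (hA ha)) (hcrit a ha)

theorem exists_monotoneOn_mem_nhdsWithin_of_derivWithin_pos {g : ℝ → ℝ} {I : Set ℝ} {w : ℝ}
    (hI : I.OrdConnected) (hg : DifferentiableOn ℝ g I)
    (hcont : ContinuousWithinAt (derivWithin g I) I w) (hpos : 0 < derivWithin g I w) :
    ∃ s ∈ 𝓝[I] w, s.OrdConnected ∧ MonotoneOn g s := by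
  obtain ⟨ε, hε, hball⟩ := Metric.mem_nhdsWithin_iff.1 (hcont (Ioi_mem_nhds hpos))
  have hs : (I ∩ Metric.ball w ε).OrdConnected := by
    rw [Real.ball_eq_Ioo]; exact hI.inter ordConnected_Ioo
  refine ⟨I ∩ Metric.ball w ε, inter_mem_nhdsWithin I (Metric.ball_mem_nhds w hε), hs, ?_⟩
  have hint : interior (I ∩ Metric.ball w ε) ⊆ I ∩ Metric.ball w ε := interior_subset
  refine monotoneOn_of_hasDerivWithinAt_nonneg hs.convex (hg.continuousOn.mono inter_subset_left)
    (fun t ht => (hg t (hint ht).1).hasDerivWithinAt.mono (hint.trans inter_subset_left))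
    fun t ht => (hball ⟨(hint ht).2, (hint ht).1⟩).le

theorem tendsto_iterate_of_mem_uIcc {g : ℝ → ℝ} {s : Set ℝ} (hs : s.OrdConnected)
    (hg : MonotoneOn g s) {w x : ℝ} (hw : w ∈ s) (hgw : g w = w) (hx : ∀ n, g^[n] x ∈ s)
    (hconv : Tendsto (fun n => g^[n] x) atTop (𝓝 w)) {u : ℝ} (hu : u ∈ uIcc x w) :
    Tendsto (fun n => g^[n] u) atTop (𝓝 w) := by
  have htrap : ∀ n, g^[n] u ∈ uIcc (g^[n] x) w := by
    intro n
    induction n with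
    | zero => exact hu
    | succ n ih =>
      simpa only [Function.iterate_succ_apply', hgw] using
        (hg.mono (hs.uIcc_subset (hx n) hw)).mapsTo_uIcc ih
  exact tendsto_iff_dist_tendsto_zero.2 (squeeze_zero (fun _ => dist_nonneg)
    (fun n => Real.dist_right_le_of_mem_uIcc (htrap n)) (tendsto_iff_dist_tendsto_zero.1 hconv))

theorem eventually_tendsto_iterate_of_mem_uIcc {g : ℝ → ℝ} {I : Set ℝ} (hI : I.OrdConnected)
    (hIu : UniqueDiffOn ℝ I) (hg : ContDiffOn ℝ 1 g I) {w x : ℝ} (hwI : w ∈ I) (hgw : g w = w)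
    (hpos : 0 < derivWithin g I w) (hx : ∀ n, g^[n] x ∈ I)
    (hconv : Tendsto (fun n => g^[n] x) atTop (𝓝 w)) :
    ∀ᶠ N in atTop, ∀ u ∈ uIcc (g^[N] x) w, Tendsto (fun n => g^[n] u) atTop (𝓝 w) := by
  obtain ⟨s, hsI, hs, hgs⟩ := exists_monotoneOn_mem_nhdsWithin_of_derivWithin_pos hI
    (hg.differentiableOn one_ne_zero) (hg.continuousOn_derivWithin hIu le_rfl w hwI) hpos
  obtain ⟨N, hN⟩ := eventually_atTop.1
    (tendsto_nhdsWithin_iff.2 ⟨hconv, Eventually.of_forall hx⟩ hsI)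
  filter_upwards [eventually_ge_atTop N] with K hK u hu
  refine tendsto_iterate_of_mem_uIcc hs hgs (mem_of_mem_nhdsWithin hwI hsI) hgw (fun n => ?_) ?_ hu
  · rw [← Function.iterate_add_apply]; exact hN _ (by omega)
  · simpa only [Function.comp_def, ← Function.iterate_add_apply] using
      hconv.comp (tendsto_add_atTop_nat K)

theorem interior_basin_nonempty_of_finite {p q : ℝ} (hpq : p < q) {f : ℝ → ℝ}
    (hf : ContDiffOn ℝ 1 f (Icc p q)) (hmaps : MapsTo f (Icc p q) (Icc p q))
    (hns : ∀ B : Set ℝ, MeasurableSet B → volume B = 0 → volume (Icc p q ∩ f ⁻¹' B) = 0)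
    {A : Set ℝ} (hAI : A ⊆ Icc p q) (hA : A.Finite) (hAinv : MapsTo f A A) {m : ℕ} (hm : 0 < m)
    (hfixA : ∀ a ∈ A, f^[m] a = a) (hnocrit : ∀ a ∈ A, derivWithin f (Icc p q) a ≠ 0)
    (hbasin : 0 < volume {x ∈ Icc p q | omegaLimitPt f x ⊆ A}) :
    (interior {x ∈ Icc p q | omegaLimitPt f x ⊆ A}).Nonempty := by
  obtain ⟨x, ⟨hxI, hxω⟩, hxA⟩ := ((frequently_ae_mem_iff.2 hbasin.ne').and_eventually
    (ae_forall_iterate_notMem hmaps hns (hA.measure_zero volume))).exists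
  -- `f^[m]` may reverse orientation near its fixed points, `f^[m * 2]` does not
  set g := f^[m * 2] with hg
  have hfixA₂ : ∀ a ∈ A, g a = a := fun a ha => by
    rw [hg, Function.iterate_mul, Function.iterate_fixed (hfixA a ha)]
  obtain ⟨w, hwA, hw⟩ := exists_tendsto_iterate_of_omegaLimitPt_subset isCompact_Icc
    hf.continuousOn hmaps hA hAI (by omega) hfixA₂ hxI hxω
  have hpos : 0 < derivWithin g (Icc p q) w := by
    have hD := ((hf.iterate hmaps m).differentiableOn one_ne_zero w (hAI hwA)).hasDerivWithinAt
    rw [hg, Function.iterate_mul, (hD.iterate w (hfixA w hwA) (hmaps.iterate m) 2).derivWithin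
      (uniqueDiffOn_Icc hpq w (hAI hwA))]
    exact sq_pos_iff.2 (derivWithin_iterate_ne_zero (uniqueDiffOn_Icc hpq)
      (hf.differentiableOn one_ne_zero) hmaps hAI hAinv hnocrit m hwA)
  obtain ⟨N, hN⟩ := (eventually_tendsto_iterate_of_mem_uIcc ordConnected_Icc
    (uniqueDiffOn_Icc hpq) (hf.iterate hmaps _) (hAI hwA) (hfixA₂ w hwA) hpos
    (fun n => (hmaps.iterate _).iterate n hxI) hw).exists
  have hsub : uIcc (g^[N] x) w ⊆ {x ∈ Icc p q | omegaLimitPt f x ⊆ A} := by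
    intro u hu
    have huI : u ∈ Icc p q :=
      ordConnected_Icc.uIcc_subset ((hmaps.iterate _).iterate N hxI) (hAI hwA) hu
    refine ⟨huI, (omegaLimitPt_subset_iff_tendsto_nhdsSet isCompact_Icc
      (fun n => hmaps.iterate n huI) hA.isClosed).2 ?_⟩
    exact tendsto_iterate_nhdsSet_of_tendsto_iterate_iterate hf.continuousOn hmaps hAinv
      (by omega) huI (hAI hwA) hwA (hN u hu)
  have hne : g^[N] x ≠ w := fun h => hxA (m * 2 * N) hxI (by rwa [Function.iterate_mul, ← hg, h])
  exact (nonempty_Ioo.2 (inf_lt_sup.2 hne)).mono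
    (interior_Icc.symm.subset.trans (interior_mono hsub))

/-- Let `f : I → I` be C² and nonsingular on a compact interval `I = [p,q]`.
Assume that for Lebesgue-a.e. `x`, either `ω(x)` contains a critical point or
`ω(x)` is a nonrepelling periodic orbit.  Then every metric attractor of `f`
containing no critical point is a topologically attracting periodic orbit. -/
theorem attractor_without_critical_points (p q : ℝ) (hpq : p < q) (f : ℝ → ℝ)
    (hC2 : ContDiffOn ℝ 2 f (Set.Icc p q))
    (hmaps : Set.MapsTo f (Set.Icc p q) (Set.Icc p q))
    -- nonsingularity
    (hns : ∀ B : Set ℝ, MeasurableSet B → volume B = 0 →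
      volume (Set.Icc p q ∩ f ⁻¹' B) = 0)
    -- almost every point: ω(x) contains a critical point or is a nonrepelling
    -- periodic orbit
    (hae : ∀ᵐ x ∂(volume.restrict (Set.Icc p q)),
      (∃ c ∈ omegaLimitPt f x, derivWithin f (Set.Icc p q) c = 0) ∨
      (∃ z : ℝ, ∃ m : ℕ, 0 < m ∧ f^[m] z = z ∧
        |derivWithin (f^[m]) (Set.Icc p q) z| ≤ 1 ∧
        omegaLimitPt f x = periodicOrbit f z))
    -- `A` is a metric attractor:
    (A : Set ℝ) (hAsub : A ⊆ Set.Icc p q) (hAc : IsCompact A)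
    (hAinv : Set.MapsTo f A A)
    (hbasin : 0 < volume {x ∈ Set.Icc p q | omegaLimitPt f x ⊆ A})
    (hmin : ∀ A' : Set ℝ, A' ⊆ A → A' ≠ A → IsCompact A' → Set.MapsTo f A' A' →
      volume {x ∈ Set.Icc p q | omegaLimitPt f x ⊆ A'} = 0)
    -- `A` contains no critical point:
    (hnocrit : ∀ c ∈ A, derivWithin f (Set.Icc p q) c ≠ 0) :
    ∃ z : ℝ, ∃ m : ℕ, 0 < m ∧ f^[m] z = z ∧ A = periodicOrbit f z ∧
      (interior {x ∈ Set.Icc p q | omegaLimitPt f x ⊆ A}).Nonempty := by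
  have hωA := ae_omegaLimitPt_eq_of_minimal isClosed_Icc hC2.continuousOn hmaps hAsub hAc hAinv
    hmin
  obtain ⟨x, ⟨hxI, hxA⟩, hωx, hx⟩ := ((frequently_ae_mem_iff.2 hbasin.ne').and_eventually
    (hωA.and ((ae_restrict_iff' measurableSet_Icc).1 hae))).exists
  rw [hωx hxI hxA] at hx
  rcases hx hxI with ⟨c, hcA, hc⟩ | ⟨z, m, hm, hz, -, hAz⟩
  · exact absurd hc (hnocrit c hcA)
  · refine ⟨z, m, hm, hz, hAz, interior_basin_nonempty_of_finite hpq (hC2.of_le one_le_two)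
      hmaps hns hAsub (hAz ▸ periodicOrbit_finite hm hz) hAinv hm ?_ hnocrit hbasin⟩
    exact fun a ha => iterate_eq_self_of_mem_periodicOrbit hz (hAz ▸ ha)
end

section
/- Let f : I → I be a unimodal map with critical point ζ, and suppose there exists a subinterval Y containing ζ in its interior such that for Lebesgue almost every x ∈ Y, the closure of the orbit of x contains Y (equivalently, the orbit of x intersects Y in a set whose closure has full measure in Y). Then the closure C of the union of all forward iterates fⁿ(Y), n ≥ 0, is a finite union of compact intervals, is forward invariant, contains ζ in its interior, and the orbit of Lebesgue almost every x ∈ C is dense in C; in particular C is a metric attractor which is a transitive cycle of intervals. -/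
/-!
Pick `x₀ ∈ Y = [a, b]` whose orbit closure contains `Y`, and a time `k > 0` with
`f^[k] x₀ ∈ Y`. The sets `(f^[k])^[j] '' Y` form a chain of overlapping intervals, so their
union `A` is an interval, and `U = ⋃ n, f^[n] '' Y` is the finite union of the intervals
`f^[r] '' A`, `r < k`. These are nondegenerate because a unimodal map is injective on each lap.
Hence `C = closure U` is a finite union of nondegenerate compact intervals and `C \ U` is null.
Off a null set, a point of `U` is `f^[n] y` with `y ∈ Y` whose orbit closure contains `Y`, hence
the closed invariant set `C`; dropping the first `n` points of that orbit loses nothing, as `C`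
has no isolated points.
-/

open MeasureTheory

/-- The forward orbit of a point. -/
def forwardOrbit (f : ℝ → ℝ) (x : ℝ) : Set ℝ := {w | ∃ n : ℕ, f^[n] x = w}

open Set Function

section Iterate

variable {α : Type*}

theorem mapsTo_iUnion_iterate_image (f : α → α) (s : Set α) :
    MapsTo f (⋃ n, f^[n] '' s) (⋃ n, f^[n] '' s) := by
  rintro _ ⟨_, ⟨n, rfl⟩, y, hy, rfl⟩
  exact mem_iUnion.2 ⟨n + 1, y, hy, iterate_succ_apply' f n y⟩

theorem iUnion_iterate_image_subset {f : α → α} {s t : Set α} (ht : MapsTo f t t)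
    (hs : s ⊆ t) : ⋃ n, f^[n] '' s ⊆ t :=
  iUnion_subset fun n => ((ht.iterate n).mono_left hs).image_subset

theorem iUnion_iterate_image_eq_biUnion_range (f : α → α) (s : Set α) {k : ℕ} (hk : 0 < k) :
    ⋃ n, f^[n] '' s = ⋃ r ∈ Finset.range k, f^[r] '' ⋃ j, (f^[k])^[j] '' s := by
  simp only [image_iUnion, ← image_comp, ← iterate_mul, ← iterate_add]
  refine subset_antisymm (iUnion_subset fun n => ?_)
    (iUnion₂_subset fun r _ => iUnion_subset fun j => subset_iUnion_of_subset _ subset_rfl)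
  refine subset_iUnion₂_of_subset (n % k) (Finset.mem_range.2 (Nat.mod_lt n hk))
    (subset_iUnion_of_subset (n / k) ?_)
  rw [Nat.mod_add_div]

theorem isPreconnected_iUnion_iterate_image [TopologicalSpace α] {f : α → α}
    (hf : Continuous f) {s : Set α} (hs : IsPreconnected s) {x : α} (hx : x ∈ s)
    (hfx : f x ∈ s) :
    IsPreconnected (⋃ j : ℕ, f^[j] '' s) :=
  IsPreconnected.iUnion_of_chain (fun j => hs.image _ (hf.iterate j).continuousOn) fun j =>
    ⟨f^[j + 1] x, ⟨f x, hfx, (iterate_succ_apply f j x).symm⟩, ⟨x, hx, rfl⟩⟩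

end Iterate

theorem mapsTo_forwardOrbit (f : ℝ → ℝ) (x : ℝ) :
    MapsTo f (forwardOrbit f x) (forwardOrbit f x) := by
  rintro _ ⟨n, rfl⟩
  exact ⟨n + 1, iterate_succ_apply' f n x⟩

theorem forwardOrbit_subset_image_Iio_union (f : ℝ → ℝ) (x : ℝ) (n : ℕ) :
    forwardOrbit f x ⊆ (fun i => f^[i] x) '' Iio n ∪ forwardOrbit f (f^[n] x) := by
  rintro _ ⟨m, rfl⟩
  rcases lt_or_ge m n with hm | hm
  · exact Or.inl ⟨m, hm, rfl⟩
  · refine Or.inr ⟨m - n, ?_⟩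
    rw [← iterate_add_apply, Nat.sub_add_cancel hm]

theorem closure_iUnion_iterate_image_subset {f : ℝ → ℝ} (hf : Continuous f) {s : Set ℝ}
    {x : ℝ} (h : s ⊆ closure (forwardOrbit f x)) :
    closure (⋃ n, f^[n] '' s) ⊆ closure (forwardOrbit f x) :=
  closure_minimal (iUnion_iterate_image_subset ((mapsTo_forwardOrbit f x).closure hf) h)
    isClosed_closure

theorem exists_pos_iterate_mem_of_subset_closure {f : ℝ → ℝ} {x : ℝ} {U : Set ℝ}
    (hU : IsOpen U) (hne : (U \ {x}).Nonempty) (h : U ⊆ closure (forwardOrbit f x)) :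
    ∃ k, 0 < k ∧ f^[k] x ∈ U := by
  obtain ⟨y, hy⟩ := hne
  obtain ⟨_, ⟨hzU, hzx⟩, k, rfl⟩ :=
    mem_closure_iff.1 (h hy.1) _ (hU.sdiff isClosed_singleton) hy
  refine ⟨k, Nat.pos_of_ne_zero ?_, hzU⟩
  rintro rfl
  exact hzx rfl

theorem subset_closure_forwardOrbit_iterate {f : ℝ → ℝ} {s : Set ℝ} {y : ℝ}
    (hs : ∀ F : Set ℝ, F.Finite → s ⊆ closure (s \ F))
    (h : s ⊆ closure (forwardOrbit f y)) (n : ℕ) :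
    s ⊆ closure (forwardOrbit f (f^[n] y)) := by
  set F := (fun i => f^[i] y) '' Iio n
  have hF : F.Finite := (finite_Iio n).image _
  have hsF : s \ F ⊆ closure (forwardOrbit f (f^[n] y)) := by
    intro z ⟨hzs, hzF⟩
    have := closure_mono (forwardOrbit_subset_image_Iio_union f y n) (h hzs)
    rw [closure_union, hF.isClosed.closure_eq] at this
    exact this.resolve_left hzF
  exact (hs F hF).trans (closure_minimal hsF isClosed_closure)

section Unimodal

theorem injOn_Icc_of_deriv_pos {f : ℝ → ℝ} (hf : Continuous f) {u v : ℝ}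
    (h : ∀ x ∈ Ioo u v, 0 < deriv f x) : InjOn f (Icc u v) :=
  (strictMonoOn_of_deriv_pos (convex_Icc u v) hf.continuousOn (by simpa using h)).injOn

theorem injOn_Icc_of_deriv_neg {f : ℝ → ℝ} (hf : Continuous f) {u v : ℝ}
    (h : ∀ x ∈ Ioo u v, deriv f x < 0) : InjOn f (Icc u v) :=
  (strictAntiOn_of_deriv_neg (convex_Icc u v) hf.continuousOn (by simpa using h)).injOn

variable {f : ℝ → ℝ} {p ζ q : ℝ}

theorem Set.Nontrivial.image_of_injOn_Icc (h₁ : InjOn f (Icc p ζ)) (h₂ : InjOn f (Icc ζ q))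
    {s : Set ℝ} (hs : s.Nontrivial) (hsc : s.OrdConnected) (hsub : s ⊆ Icc p q) :
    (f '' s).Nontrivial := by
  obtain ⟨u, hu, v, hv, huv⟩ := hs.exists_lt
  have hpu := (hsub hu).1
  have hvq := (hsub hv).2
  rcases le_or_gt v ζ with hvζ | hζv
  · exact ⟨f u, mem_image_of_mem f hu, f v, mem_image_of_mem f hv,
      h₁.ne ⟨hpu, huv.le.trans hvζ⟩ ⟨hpu.trans huv.le, hvζ⟩ huv.ne⟩
  rcases le_or_gt ζ u with hζu | huζ
  · exact ⟨f u, mem_image_of_mem f hu, f v, mem_image_of_mem f hv,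
      h₂.ne ⟨hζu, huv.le.trans hvq⟩ ⟨hζu.trans huv.le, hvq⟩ huv.ne⟩
  · have hζs : ζ ∈ s := hsc.out hu hv ⟨huζ.le, hζv.le⟩
    exact ⟨f u, mem_image_of_mem f hu, f ζ, mem_image_of_mem f hζs,
      h₁.ne ⟨hpu, huζ.le⟩ ⟨hpu.trans huζ.le, le_rfl⟩ huζ.ne⟩

theorem Set.Nontrivial.iterate_image_of_injOn_Icc (hf : Continuous f)
    (hmaps : MapsTo f (Icc p q) (Icc p q)) (h₁ : InjOn f (Icc p ζ)) (h₂ : InjOn f (Icc ζ q))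
    {s : Set ℝ} (hs : s.Nontrivial) (hsc : IsPreconnected s) (hsub : s ⊆ Icc p q) (n : ℕ) :
    (f^[n] '' s).Nontrivial := by
  induction n with
  | zero => simpa using hs
  | succ n ih =>
    rw [iterate_succ', image_comp]
    exact ih.image_of_injOn_Icc h₁ h₂ (hsc.image _ (hf.iterate n).continuousOn).ordConnected
      ((hmaps.iterate n).mono_left hsub).image_subset

end Unimodal

theorem IsPreconnected.exists_lt_closure_eq_Icc {s : Set ℝ} (hsc : IsPreconnected s)
    (hsb : Bornology.IsBounded s) (hsn : s.Nontrivial) :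
    ∃ c d, c < d ∧ closure s = Icc c d := by
  have hC :=
    eq_Icc_of_connected_compact ⟨hsn.nonempty.closure, hsc.closure⟩ hsb.isCompact_closure
  refine ⟨_, _, not_le.1 fun hle => ?_, hC⟩
  exact (hsn.mono subset_closure).not_subsingleton (hC ▸ subsingleton_Icc_of_ge hle)

theorem exists_finset_Icc_eq_closure_biUnion {ι : Type*} (I : Finset ι) {s : ι → Set ℝ}
    (hc : ∀ i ∈ I, IsPreconnected (s i)) (hb : ∀ i ∈ I, Bornology.IsBounded (s i))
    (hn : ∀ i ∈ I, (s i).Nontrivial) :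
    ∃ S : Finset (ℝ × ℝ), (∀ r ∈ S, r.1 < r.2) ∧
      closure (⋃ i ∈ I, s i) = ⋃ r ∈ S, Icc r.1 r.2 := by
  classical
  have h i (hi : i ∈ I) := (hc i hi).exists_lt_closure_eq_Icc (hb i hi) (hn i hi)
  choose! c d hcd hs using h
  refine ⟨I.image fun i => (c i, d i), by simpa using hcd, ?_⟩
  rw [Finset.closure_biUnion, Finset.set_biUnion_finset_image]
  exact iUnion₂_congr hs

theorem biUnion_Icc_subset_closure_diff {ι : Type*} {S : Set ι} {c d : ι → ℝ}
    (hS : ∀ i ∈ S, c i < d i) {F : Set ℝ} (hF : F.Finite) :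
    ⋃ i ∈ S, Icc (c i) (d i) ⊆ closure ((⋃ i ∈ S, Icc (c i) (d i)) \ F) := by
  refine iUnion₂_subset fun i hi => ?_
  have hdense : Ioo (c i) (d i) ⊆ closure (Ioo (c i) (d i) ∩ Fᶜ) :=
    (hF.countable.dense_compl ℝ).open_subset_closure_inter isOpen_Ioo
  calc Icc (c i) (d i) = closure (Ioo (c i) (d i)) := (closure_Ioo (hS i hi).ne).symm
    _ ⊆ closure (Ioo (c i) (d i) ∩ Fᶜ) := closure_minimal hdense isClosed_closure
    _ ⊆ closure ((⋃ i ∈ S, Icc (c i) (d i)) \ F) :=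
      closure_mono fun x hx => ⟨mem_biUnion hi (Ioo_subset_Icc_self hx.1), hx.2⟩

theorem measure_closure_biUnion_diff_eq_zero {E : Type*} [NormedAddCommGroup E]
    [NormedSpace ℝ E] [MeasurableSpace E] [BorelSpace E] [FiniteDimensional ℝ E]
    (μ : Measure E) [μ.IsAddHaarMeasure] {ι : Type*} (I : Finset ι) {s : ι → Set E}
    (hs : ∀ i ∈ I, Convex ℝ (s i)) :
    μ (closure (⋃ i ∈ I, s i) \ ⋃ i ∈ I, s i) = 0 := by
  refine measure_mono_null ?_ ((measure_biUnion_null_iff I.countable_toSet).2 fun i hi =>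
    (hs i hi).addHaar_frontier μ)
  rw [Finset.closure_biUnion]
  rintro x ⟨hx, hxs⟩
  obtain ⟨i, hi, hxi⟩ := mem_iUnion₂.1 hx
  exact mem_iUnion₂.2 ⟨i, hi, hxi, fun h => hxs (mem_biUnion hi (interior_subset h))⟩

theorem exists_finset_Icc_eq_closure_iUnion_iterate_image {f : ℝ → ℝ} (hf : Continuous f)
    {s : Set ℝ} (hsc : IsPreconnected s) {x : ℝ} {k : ℕ} (hk : 0 < k) (hx : x ∈ s)
    (hkx : f^[k] x ∈ s) (hb : Bornology.IsBounded (⋃ n, f^[n] '' s))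
    (hn : ∀ n, (f^[n] '' s).Nontrivial) :
    (∃ S : Finset (ℝ × ℝ), (∀ r ∈ S, r.1 < r.2) ∧
      closure (⋃ n, f^[n] '' s) = ⋃ r ∈ S, Icc r.1 r.2) ∧
    volume (closure (⋃ n, f^[n] '' s) \ ⋃ n, f^[n] '' s) = 0 := by
  set A := ⋃ j, (f^[k])^[j] '' s
  have hU := iUnion_iterate_image_eq_biUnion_range f s hk
  have hA : ∀ r, IsPreconnected (f^[r] '' A) := fun r =>
    (isPreconnected_iUnion_iterate_image (hf.iterate k) hsc hx hkx).image _
      (hf.iterate r).continuousOn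
  have hAU : ∀ r ∈ Finset.range k, f^[r] '' A ⊆ ⋃ n, f^[n] '' s := fun r hr =>
    hU ▸ subset_biUnion_of_mem (u := fun r => f^[r] '' A) hr
  refine ⟨hU ▸ exists_finset_Icc_eq_closure_biUnion _ (fun r _ => hA r)
    (fun r hr => hb.subset (hAU r hr)) fun r _ => (hn r).mono (image_mono ?_), ?_⟩
  · exact subset_iUnion_of_subset 0 (by simp)
  · rw [hU]
    exact measure_closure_biUnion_diff_eq_zero volume _ fun r _ => (hA r).ordConnected.convex

theorem ae_subset_closure_forwardOrbit {f : ℝ → ℝ} (hf : Differentiable ℝ f) {Y : Set ℝ}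
    (hY : MeasurableSet Y)
    (hrec : ∀ᵐ x ∂volume.restrict Y, Y ⊆ closure (forwardOrbit f x))
    (hperf : ∀ F : Set ℝ, F.Finite →
      closure (⋃ n, f^[n] '' Y) ⊆ closure (closure (⋃ n, f^[n] '' Y) \ F))
    (hnull : volume (closure (⋃ n, f^[n] '' Y) \ ⋃ n, f^[n] '' Y) = 0) :
    ∀ᵐ x ∂volume.restrict (closure (⋃ n, f^[n] '' Y)),
      closure (⋃ n, f^[n] '' Y) ⊆ closure (forwardOrbit f x) := by
  set B := {x | x ∈ Y ∧ ¬ Y ⊆ closure (forwardOrbit f x)}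
  have hB : volume B = 0 := by
    rw [ae_restrict_iff' hY, ae_iff] at hrec
    simpa only [Classical.not_imp] using hrec
  have hBn : volume (⋃ n, f^[n] '' B) = 0 := measure_iUnion_null fun n =>
    addHaar_image_eq_zero_of_differentiableOn_of_addHaar_eq_zero _
      (hf.iterate n).differentiableOn hB
  rw [ae_restrict_iff' isClosed_closure.measurableSet]
  filter_upwards [measure_eq_zero_iff_ae_notMem.1 hnull, measure_eq_zero_iff_ae_notMem.1 hBn]
    with x hxU hxB hxC
  obtain ⟨_, ⟨n, rfl⟩, y, hy, rfl⟩ := not_not.1 fun h => hxU ⟨hxC, h⟩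
  have hyY : Y ⊆ closure (forwardOrbit f y) :=
    not_not.1 fun h => hxB (mem_iUnion.2 ⟨n, y, ⟨hy, h⟩, rfl⟩)
  exact subset_closure_forwardOrbit_iterate hperf
    (closure_iUnion_iterate_image_subset hf.continuous hyY) n

theorem transitive_cycle_of_intervals_general (p q : ℝ) (f : ℝ → ℝ) (ζ : ℝ)
    (hC1 : ContDiff ℝ 1 f)
    (hmaps : Set.MapsTo f (Set.Icc p q) (Set.Icc p q))
    (hsign : ((∀ x ∈ Set.Ioo p ζ, 0 < deriv f x) ∧ ∀ x ∈ Set.Ioo ζ q, deriv f x < 0) ∨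
             ((∀ x ∈ Set.Ioo p ζ, deriv f x < 0) ∧ ∀ x ∈ Set.Ioo ζ q, 0 < deriv f x))
    (a b : ℝ) (hab : a < ζ ∧ ζ < b) (hY : Set.Icc a b ⊆ Set.Icc p q)
    (hrec : ∀ᵐ x ∂(volume.restrict (Set.Icc a b)),
      Set.Icc a b ⊆ closure (forwardOrbit f x)) :
    ∃ C : Set ℝ, C = closure (⋃ n : ℕ, f^[n] '' Set.Icc a b) ∧
      (∃ S : Finset (ℝ × ℝ), (∀ r ∈ S, r.1 ≤ r.2) ∧
        C = ⋃ r ∈ S, Set.Icc r.1 r.2) ∧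
      Set.MapsTo f C C ∧ ζ ∈ interior C ∧
      ∀ᵐ x ∂(volume.restrict C), C ⊆ closure (forwardOrbit f x) := by
  have hf : Continuous f := hC1.continuous
  have hab' : a < b := hab.1.trans hab.2
  obtain ⟨h₁, h₂⟩ : InjOn f (Icc p ζ) ∧ InjOn f (Icc ζ q) := by
    rcases hsign with ⟨hl, hr⟩ | ⟨hl, hr⟩
    exacts [⟨injOn_Icc_of_deriv_pos hf hl, injOn_Icc_of_deriv_neg hf hr⟩,
      ⟨injOn_Icc_of_deriv_neg hf hl, injOn_Icc_of_deriv_pos hf hr⟩]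
  have : NeZero (volume.restrict (Icc a b)) := ⟨by simpa using hab'⟩
  obtain ⟨x₀, hx₀Y, hx₀⟩ := ((ae_restrict_mem measurableSet_Icc).and hrec).exists
  obtain ⟨k, hk, hkx₀⟩ := exists_pos_iterate_mem_of_subset_closure isOpen_Ioo
    ((Ioo_infinite hab').sdiff (finite_singleton x₀)).nonempty (Ioo_subset_Icc_self.trans hx₀)
  obtain ⟨⟨S, hS, hCS⟩, hnull⟩ := exists_finset_Icc_eq_closure_iUnion_iterate_image hf
    isPreconnected_Icc hk hx₀Y (Ioo_subset_Icc_self hkx₀)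
    ((Metric.isBounded_Icc p q).subset (iUnion_iterate_image_subset hmaps hY))
    ((Icc_infinite hab').nontrivial.iterate_image_of_injOn_Icc hf hmaps h₁ h₂
      isPreconnected_Icc hY)
  have hYC : Icc a b ⊆ closure (⋃ n, f^[n] '' Icc a b) :=
    (subset_iUnion_of_subset 0 (by simp)).trans subset_closure
  refine ⟨_, rfl, ⟨S, fun r hr => (hS r hr).le, hCS⟩,
    (mapsTo_iUnion_iterate_image f _).closure hf,
    isOpen_Ioo.subset_interior_iff.2 (Ioo_subset_Icc_self.trans hYC) hab, ?_⟩
  exact ae_subset_closure_forwardOrbit (hC1.differentiable one_ne_zero) measurableSet_Icc hrec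
    (fun F hF => hCS ▸ biUnion_Icc_subset_closure_diff hS hF) hnull

/-- Let `f` be a unimodal map of `I = [p,q]` with critical point `ζ`, and let
`Y = [a,b]` be a subinterval containing `ζ` in its interior such that for a.e.
`x ∈ Y` the closure of the orbit of `x` contains `Y`.  Then
`C = closure (⋃ n, fⁿ(Y))` is a finite union of compact intervals, forward
invariant, contains `ζ` in its interior, and the orbit of a.e. `x ∈ C` is dense
in `C`: `C` is a metric attractor which is a transitive cycle of intervals. -/
theorem transitive_cycle_of_intervals (p q : ℝ) (hpq : p < q) (f : ℝ → ℝ) (ζ : ℝ)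
    (hC1 : ContDiff ℝ 1 f)
    (hmaps : Set.MapsTo f (Set.Icc p q) (Set.Icc p q))
    (hζ : ζ ∈ Set.Ioo p q)
    (hcrit : ∀ x ∈ Set.Icc p q, (deriv f x = 0 ↔ x = ζ))
    (hsign : ((∀ x ∈ Set.Ioo p ζ, 0 < deriv f x) ∧ ∀ x ∈ Set.Ioo ζ q, deriv f x < 0) ∨
             ((∀ x ∈ Set.Ioo p ζ, deriv f x < 0) ∧ ∀ x ∈ Set.Ioo ζ q, 0 < deriv f x))
    (hbd : f '' {p, q} ⊆ {p, q})
    (a b : ℝ) (hab : a < ζ ∧ ζ < b) (hY : Set.Icc a b ⊆ Set.Icc p q)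
    (hrec : ∀ᵐ x ∂(volume.restrict (Set.Icc a b)),
      Set.Icc a b ⊆ closure (forwardOrbit f x)) :
    ∃ C : Set ℝ, C = closure (⋃ n : ℕ, f^[n] '' Set.Icc a b) ∧
      (∃ S : Finset (ℝ × ℝ), (∀ r ∈ S, r.1 ≤ r.2) ∧
        C = ⋃ r ∈ S, Set.Icc r.1 r.2) ∧
      Set.MapsTo f C C ∧ ζ ∈ interior C ∧
      ∀ᵐ x ∂(volume.restrict C), C ⊆ closure (forwardOrbit f x) :=
  transitive_cycle_of_intervals_general p q f ζ hC1 hmaps hsign a b hab hY hrec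
end
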